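/- arXiv:2010.01325 — 8 statements merged into one kernel-verified Lean document; each statement's English description precedes it below -/
import Mathlib

section
/- Let $p$ be a prime and $\delta_p$ the base-$p$ digit sum. Suppose $n \ge p+1$ is a natural number with $\delta_p(n(p-1)) = p-1$, and write $n(p-1) = \sum_{i=1}^{p-1} p^{a_i}$ with $0 \le a_1 \le \cdots \le a_{p-1}$. Then $a_{p-1} \ge 2$, and setting $n' := n - p^{a_{p-1}-1}$ and $n'' := n - (p+1)p^{a_{p-1}-2}$, both $n'$ and $n''$ are nonnegative integers strictly less than $n$ satisfying $\delta_p(n'(p-1)) = \delta_p(n''(p-1)) = p-1$. -/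
lemma dsum_succ_le (p : ℕ) (hp : 1 < p) : ∀ m, (Nat.digits p (m+1)).sum ≤ (Nat.digits p m).sum + 1 := by
  intro m
  induction m using Nat.strong_induction_on with
  | _ m ih =>
    rcases Nat.eq_zero_or_pos m with rfl | h0
    · rw [zero_add, Nat.digits_def' hp one_pos]
      simp [Nat.mod_eq_of_lt hp, Nat.div_eq_of_lt hp]
    have hplt : m % p < p := Nat.mod_lt m (by omega)
    have hmd := Nat.mod_add_div' m p
    rcases lt_or_ge (m % p) (p-1) with h | h
    · have hm1 : m + 1 = (m % p + 1) + (m / p) * p := by omega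
      have h1 : (m+1) % p = m % p + 1 := by
        rw [hm1, Nat.add_mul_mod_self_right]
        exact Nat.mod_eq_of_lt (by omega)
      have h2 : (m+1) / p = m / p := by
        rw [hm1, Nat.add_mul_div_right _ _ (by omega : 0 < p),
          Nat.div_eq_of_lt (by omega), zero_add]
      rw [Nat.digits_def' hp (by omega), Nat.digits_def' hp h0, h1, h2]
      simp only [List.sum_cons]; omega
    · have hr : m % p = p - 1 := by omega
      have hm1 : m + 1 = p * (m / p + 1) := by rw [mul_add, mul_one, mul_comm]; omega
      have h1 : (m+1) % p = 0 := by rw [hm1, Nat.mul_mod_right]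
      have h2 : (m+1) / p = m / p + 1 := by
        rw [hm1, Nat.mul_div_cancel_left _ (by omega : 0 < p)]
      have hlt : m / p < m := Nat.div_lt_self h0 hp
      have := ih (m / p) hlt
      rw [Nat.digits_def' hp (by omega), Nat.digits_def' hp h0, h1, h2, hr]
      simp only [List.sum_cons]; omega

lemma dsum_add_pow_le (p : ℕ) (hp : 1 < p) (e : ℕ) :
    ∀ m, (Nat.digits p (m + p^e)).sum ≤ (Nat.digits p m).sum + 1 := by
  induction e with
  | zero => simpa using dsum_succ_le p hp
  | succ e ih =>
    intro m
    have hmd := Nat.mod_add_div' m p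
    have key : m + p^(e+1) = m % p + (m / p + p^e) * p := by
      rw [add_mul, pow_succ]; omega
    have hpos : 0 < m + p^(e+1) := by positivity
    have h1 : (m + p^(e+1)) % p = m % p := by
      rw [key, Nat.add_mul_mod_self_right]
      exact Nat.mod_eq_of_lt (Nat.mod_lt m (by omega))
    have h2 : (m + p^(e+1)) / p = m / p + p^e := by
      rw [key, Nat.add_mul_div_right _ _ (by omega : 0 < p),
        Nat.div_eq_of_lt (Nat.mod_lt m (by omega)), zero_add]
    rw [Nat.digits_def' hp hpos, h1, h2]
    have hih := ih (m / p)
    rcases Nat.eq_zero_or_pos m with rfl | hm0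
    · simpa using hih
    · rw [Nat.digits_def' hp hm0]
      simp only [List.sum_cons]; omega

lemma dsum_pos (p : ℕ) (hp : 1 < p) : ∀ m, 0 < m → 0 < (Nat.digits p m).sum := by
  intro m
  induction m using Nat.strong_induction_on with
  | _ m ih =>
    intro hm
    rw [Nat.digits_def' hp hm]
    simp only [List.sum_cons]
    rcases Nat.eq_zero_or_pos (m % p) with h | h
    · have hdvd : p ∣ m := Nat.dvd_of_mod_eq_zero h
      have hq : 0 < m / p := Nat.div_pos (Nat.le_of_dvd hm hdvd) (by omega)
      have := ih (m / p) (Nat.div_lt_self hm hp) hq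
      omega
    · omega

lemma dsum_sum_pow_le (p : ℕ) (hp : 1 < p) {ι : Type*} [DecidableEq ι] (s : Finset ι) (b : ι → ℕ) :
    (Nat.digits p (∑ i ∈ s, p ^ b i)).sum ≤ s.card := by
  induction s using Finset.induction with
  | empty => simp
  | @insert x s hx ih =>
    rw [Finset.sum_insert hx, add_comm, Finset.card_insert_of_notMem hx]
    exact le_trans (dsum_add_pow_le p hp (b x) _) (by omega)

lemma dsum_eq_of_sum_pow (p : ℕ) (hp : p.Prime) (b : Fin (p-1) → ℕ) :
    (Nat.digits p (∑ i, p ^ b i)).sum = p - 1 := by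
  have hp1 : 1 < p := hp.one_lt
  have hpmod : p % (p - 1) = 1 % (p - 1) := by
    have := Nat.add_mod_left (p-1) 1
    rwa [show p - 1 + 1 = p by omega] at this
  have hle : (Nat.digits p (∑ i, p ^ b i)).sum ≤ p - 1 := by
    have := dsum_sum_pow_le p hp1 Finset.univ b
    simpa using this
  have hne : Nonempty (Fin (p-1)) := Fin.pos_iff_nonempty.mp (by omega)
  have hpos : 0 < ∑ i, p ^ b i :=
    Finset.sum_pos (fun i _ => pow_pos (by omega) _) Finset.univ_nonempty
  have hdsum_pos := dsum_pos p hp1 _ hpos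
  have hmod : (∑ i, p ^ b i) % (p - 1) = 0 := by
    rw [Finset.sum_nat_mod]
    have hterm : ∀ i : Fin (p-1), p ^ b i % (p - 1) = 1 % (p - 1) := by
      intro i
      rw [Nat.pow_mod, hpmod, ← Nat.pow_mod, one_pow]
    simp only [hterm]
    rw [Finset.sum_const, Finset.card_univ, Fintype.card_fin, smul_eq_mul,
      Nat.mul_mod, Nat.mod_self, Nat.zero_mul, Nat.zero_mod]
  have hmodeq : (∑ i, p ^ b i) ≡ (Nat.digits p (∑ i, p ^ b i)).sum [MOD p - 1] := by
    rcases Nat.lt_or_ge p 3 with h | h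
    · have h2 : p = 2 := by omega
      subst h2
      exact Nat.modEq_one
    · exact Nat.modEq_digits_sum (p-1) p (by rw [hpmod]; exact Nat.mod_eq_of_lt (by omega)) _
  have hdvd : (p - 1) ∣ (Nat.digits p (∑ i, p ^ b i)).sum :=
    (Nat.modEq_zero_iff_dvd).mp (hmodeq.symm.trans (Nat.modEq_zero_iff_dvd.mpr (Nat.dvd_of_mod_eq_zero hmod)))
  exact Nat.le_antisymm hle (Nat.le_of_dvd hdsum_pos hdvd)
open Finset in
/-- Induction step in the analysis of indices with `δ_p(n(p-1)) = p - 1`: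
if `n ≥ p + 1` and `n(p-1) = ∑_{i=1}^{p-1} p^{a_i}` with `a` monotone, then the largest
exponent is at least `2`, and both `n' = n - p^{a_{p-1}-1}` and `n'' = n - (p+1)p^{a_{p-1}-2}`
are smaller than `n` and again satisfy the digit-sum condition. -/
theorem digit_sum_descent (p : ℕ) (hp : p.Prime) (n : ℕ) (hn : p + 1 ≤ n)
    (hδ : (Nat.digits p (n * (p - 1))).sum = p - 1)
    (a : Fin (p - 1) → ℕ) (ha : Monotone a)
    (hsum : n * (p - 1) = ∑ i, p ^ a i)
    (hi : p - 2 < p - 1) :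
    2 ≤ a ⟨p - 2, hi⟩ ∧
    n - p ^ (a ⟨p - 2, hi⟩ - 1) < n ∧
    n - (p + 1) * p ^ (a ⟨p - 2, hi⟩ - 2) < n ∧
    (Nat.digits p ((n - p ^ (a ⟨p - 2, hi⟩ - 1)) * (p - 1))).sum = p - 1 ∧
    (Nat.digits p ((n - (p + 1) * p ^ (a ⟨p - 2, hi⟩ - 2)) * (p - 1))).sum = p - 1 := by
  have hp2 : 2 ≤ p := hp.two_le
  set L : Fin (p - 1) := ⟨p - 2, hi⟩ with hL
  set A : ℕ := a L with hA
  have hmax : ∀ i : Fin (p-1), a i ≤ A := by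
    intro i
    exact ha (by rw [Fin.le_def]; simp only [hL]; omega)
  -- p^A ≤ n * (p-1)
  have hpA : p ^ A ≤ n * (p - 1) := by
    rw [hsum]
    exact Finset.single_le_sum (f := fun i => p ^ a i) (fun i _ => Nat.zero_le _) (mem_univ L)
  -- A ≥ 2
  have hA2 : 2 ≤ A := by
    by_contra hc
    push_neg at hc
    have hb : ∀ i : Fin (p-1), p ^ a i ≤ p := by
      intro i
      calc p ^ a i ≤ p ^ 1 := Nat.pow_le_pow_right (by omega) (by have := hmax i; omega)
        _ = p := pow_one p
    have : n * (p-1) ≤ (p-1) * p := by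
      rw [hsum]
      calc (∑ i, p ^ a i) ≤ ∑ _i : Fin (p-1), p := Finset.sum_le_sum (fun i _ => hb i)
        _ = (p-1) * p := by simp [mul_comm]
    have hnp : n ≤ p := Nat.le_of_mul_le_mul_right (by rw [mul_comm (p-1) p] at this; exact this) (by omega)
    omega
  -- key power identities
  have e1 : p ^ (A-1) * (p - 1) + p ^ (A-1) = p ^ A := by
    rw [← Nat.mul_succ, show (p-1).succ = p by omega, ← pow_succ, show A - 1 + 1 = A by omega]
  have e2 : (p + 1) * p ^ (A-2) * (p - 1) + p ^ (A-2) = p ^ A := by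
    have h22 : (p+1) * (p-1) + 1 = p ^ 2 := by
      obtain ⟨q, rfl⟩ : ∃ q, p = q + 2 := ⟨p - 2, by omega⟩
      simp only [show q + 2 + 1 = q + 3 from rfl, show q + 2 - 1 = q + 1 from rfl]
      ring
    calc (p + 1) * p ^ (A-2) * (p - 1) + p ^ (A-2)
        = ((p+1) * (p-1) + 1) * p ^ (A-2) := by ring
      _ = p ^ 2 * p ^ (A-2) := by rw [h22]
      _ = p ^ A := by rw [← pow_add]; congr 1; omega
  -- strict bounds
  have hx1 : p ^ (A-1) < n := by
    have h1 : p ^ (A-1) * (p-1) < n * (p-1) := by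
      have : 0 < p ^ (A-1) := pow_pos (by omega) _
      omega
    exact Nat.lt_of_mul_lt_mul_right h1
  have hx2 : (p+1) * p ^ (A-2) < n := by
    have h1 : (p+1) * p ^ (A-2) * (p-1) < n * (p-1) := by
      have : 0 < p ^ (A-2) := pow_pos (by omega) _
      omega
    exact Nat.lt_of_mul_lt_mul_right h1
  -- split the sum
  have hsplit : ∑ i, p ^ a i = (∑ i ∈ univ.erase L, p ^ a i) + p ^ A :=
    (Finset.sum_erase_add _ _ (mem_univ L)).symm
  set S : ℕ := ∑ i ∈ univ.erase L, p ^ a i with hS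
  -- values of the new products
  have v1 : (n - p ^ (A-1)) * (p - 1) = S + p ^ (A-1) := by
    rw [Nat.sub_mul]
    have := hsum.trans hsplit
    omega
  have v2 : (n - (p+1) * p ^ (A-2)) * (p - 1) = S + p ^ (A-2) := by
    rw [Nat.sub_mul]
    have := hsum.trans hsplit
    omega
  -- rewrite as full sums over Fin (p-1) using Function.update
  have w : ∀ c : ℕ, S + p ^ c = ∑ i, p ^ (Function.update a L c i) := by
    intro c
    rw [← Finset.sum_erase_add _ _ (mem_univ L), Function.update_self]
    congr 1
    exact Finset.sum_congr rfl (fun i hiM => by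
      rw [Function.update_of_ne (Finset.ne_of_mem_erase hiM)])
  have w1 := w (A-1)
  have w2 := w (A-2)
  refine ⟨hA2, Nat.sub_lt (by omega) (pow_pos (by omega) _),
    Nat.sub_lt (by omega) (by positivity), ?_, ?_⟩
  · rw [v1, w1]; exact dsum_eq_of_sum_pow p hp _
  · rw [v2, w2]; exact dsum_eq_of_sum_pow p hp _
end

section
/- Let $p$ be a prime, let $A, B$ be indeterminates, and define a sequence $(s_n)_{n \ge 0}$ in $\mathbb{F}_p[A,B]$ by $s_0 = 1$, $s_n = 0$ for $1 \le n \le p$, and $s_n = A s_{n-p} + B s_{n-p-1}$ for $n \ge p+1$. Then for every $n \ge 1$ with $\delta_p(n(p-1)) = p-1$ (where $\delta_p$ is the base-$p$ digit sum), we have $s_n = 0$. -/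
open Finset

private lemma sum_digits_eq_zero {p x : ℕ} (hp : 2 ≤ p)
    (h : (Nat.digits p x).sum = 0) : x = 0 := by
  induction x using Nat.strong_induction_on with
  | _ x IH =>
    rcases Nat.eq_zero_or_pos x with rfl | hx
    · rfl
    · rw [Nat.digits_def' (show 1 < p by omega) hx, List.sum_cons] at h
      have h1 : x % p = 0 := by omega
      have h2 : x / p = 0 := IH (x / p) (Nat.div_lt_self hx (by omega)) (by omega)
      have := Nat.div_add_mod x p
      rw [h1, h2] at this
      omega

private lemma digits_sum_single {p c : ℕ} (hp : 2 ≤ p) (hc : c < p) :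
    (Nat.digits p c).sum = c := by
  rcases Nat.eq_zero_or_pos c with rfl | h
  · simp
  · rw [Nat.digits_def' (show 1 < p by omega) h, Nat.mod_eq_of_lt hc, Nat.div_eq_of_lt hc]
    simp

private lemma digits_sum_add {p : ℕ} (hp : 2 ≤ p) :
    ∀ (k c r : ℕ), r < p ^ k →
      (Nat.digits p (c * p ^ k + r)).sum = (Nat.digits p c).sum + (Nat.digits p r).sum := by
  intro k
  induction k with
  | zero =>
    intro c r hr
    rw [pow_zero] at hr
    have : r = 0 := by omega
    subst this
    simp
  | succ k IH =>
    intro c r hr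
    rcases Nat.eq_zero_or_pos (c * p ^ (k+1) + r) with h0 | h0
    · have hc : c = 0 := by
        have hpk : 0 < p ^ (k+1) := pow_pos (by omega) _
        rcases Nat.mul_eq_zero.mp (by omega : c * p ^ (k+1) = 0) with h | h
        · exact h
        · omega
      have hr0 : r = 0 := by omega
      simp [hc, hr0]
    · rw [Nat.digits_def' (show 1 < p by omega) h0, List.sum_cons]
      have hmod : (c * p ^ (k+1) + r) % p = r % p := by
        rw [pow_succ, show c * (p ^ k * p) = p * (c * p ^ k) by ring, Nat.mul_add_mod]
      have hdiv : (c * p ^ (k+1) + r) / p = c * p ^ k + r / p := by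
        rw [pow_succ, show c * (p ^ k * p) = p * (c * p ^ k) by ring,
          Nat.mul_add_div (by omega : 0 < p)]
      have hrlt : r / p < p ^ k := by
        apply Nat.div_lt_of_lt_mul
        rw [show p * p ^ k = p ^ k * p by ring, ← pow_succ]
        exact hr
      rw [hmod, hdiv, IH c (r / p) hrlt]
      have hsum : (Nat.digits p r).sum = r % p + (Nat.digits p (r / p)).sum := by
        rcases Nat.eq_zero_or_pos r with rfl | hr0
        · simp
        · rw [Nat.digits_def' (show 1 < p by omega) hr0, List.sum_cons]
      rw [hsum]
      ring


private lemma pascal_sum {R : Type*} [CommSemiring R] (k : ℕ) (X : ℕ → R) :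
    ∑ j ∈ range (k+2), ((k+1).choose j : R) * X j =
      ∑ j ∈ range (k+1), (k.choose j : R) * X j
        + ∑ j ∈ range (k+1), (k.choose j : R) * X (j+1) := by
  rw [Finset.sum_range_succ' (fun j => ((k+1).choose j : R) * X j) (k+1),
      Finset.sum_range_succ' (fun j => (k.choose j : R) * X j) k]
  have h1 : ∀ j ∈ range (k+1), ((k+1).choose (j+1) : R) * X (j+1)
      = (k.choose j : R) * X (j+1) + (k.choose (j+1) : R) * X (j+1) := by
    intro j _
    rw [Nat.choose_succ_succ]
    push_cast
    ring
  rw [Finset.sum_congr rfl h1, Finset.sum_add_distrib]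
  have h2 : ∑ j ∈ range (k+1), (k.choose (j+1) : R) * X (j+1)
      = ∑ j ∈ range k, (k.choose (j+1) : R) * X (j+1) := by
    rw [Finset.sum_range_succ, Nat.choose_succ_self]
    simp
  rw [h2]
  simp only [Nat.choose_zero_right, Nat.cast_one, one_mul]
  ring

private lemma iter_sum {R : Type*} [CommSemiring R] (s : ℕ → R) (α β : R) (P Q : ℕ)
    (hPQ : P ≤ Q)
    (hbase : ∀ m, Q ≤ m → s m = α * s (m - P) + β * s (m - Q)) :
    ∀ k n, k * Q ≤ n →
      s n = ∑ j ∈ range (k+1),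
        (k.choose j : R) * (α ^ (k-j) * β ^ j * s (n - ((k-j) * P + j * Q))) := by
  intro k
  induction k with
  | zero => intro n _; simp
  | succ k IH =>
    intro n hn
    have hkQ : k * Q ≤ n := le_trans (Nat.mul_le_mul_right Q (Nat.le_succ k)) hn
    have key : ∀ j ∈ range (k+1),
        (k.choose j : R) * (α ^ (k-j) * β ^ j * s (n - ((k-j) * P + j * Q)))
        = (k.choose j : R) * (α ^ (k+1-j) * β ^ j * s (n - ((k+1-j) * P + j * Q)))
          + (k.choose j : R) * (α ^ (k+1-(j+1)) * β ^ (j+1)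
              * s (n - ((k+1-(j+1)) * P + (j+1) * Q))) := by
      intro j hj
      have hjk : j ≤ k := Nat.lt_succ_iff.mp (mem_range.mp hj)
      have hle : ((k-j) * P + j * Q) + Q ≤ n := by
        have hh1 : (k-j) * P ≤ (k-j) * Q := Nat.mul_le_mul_left _ hPQ
        have hh2 : (k-j) * Q + j * Q + Q = (k+1) * Q := by
          have h3 : (k - j) + j + 1 = k + 1 := by omega
          calc (k-j) * Q + j * Q + Q = ((k-j) + j + 1) * Q := by ring
            _ = (k+1) * Q := by rw [h3]
        calc (k-j) * P + j * Q + Q ≤ (k-j) * Q + j * Q + Q :=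
              Nat.add_le_add_right (Nat.add_le_add_right hh1 _) _
          _ = (k+1) * Q := hh2
          _ ≤ n := hn
      have hQ : Q ≤ n - ((k-j) * P + j * Q) := Nat.le_sub_of_add_le (by omega)
      rw [hbase _ hQ]
      have e1 : n - ((k-j) * P + j * Q) - P = n - ((k+1-j) * P + j * Q) := by
        rw [Nat.sub_sub]
        congr 1
        have h3 : k+1-j = (k-j)+1 := by omega
        rw [h3]; ring
      have e2 : n - ((k-j) * P + j * Q) - Q = n - ((k-j) * P + (j+1) * Q) := by
        rw [Nat.sub_sub]
        congr 1
        ring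
      have e3 : k + 1 - j = (k - j) + 1 := by omega
      have e4 : k + 1 - (j+1) = k - j := by omega
      rw [e1, e2, e3, e4]
      ring
    calc s n = ∑ j ∈ range (k+1),
          (k.choose j : R) * (α ^ (k-j) * β ^ j * s (n - ((k-j) * P + j * Q))) := IH n hkQ
      _ = ∑ j ∈ range (k+1),
            (k.choose j : R) * (α ^ (k+1-j) * β ^ j * s (n - ((k+1-j) * P + j * Q)))
          + ∑ j ∈ range (k+1),
            (k.choose j : R) * (α ^ (k+1-(j+1)) * β ^ (j+1)
              * s (n - ((k+1-(j+1)) * P + (j+1) * Q))) := by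
          rw [← Finset.sum_add_distrib]
          exact Finset.sum_congr rfl key
      _ = ∑ j ∈ range (k+2),
            ((k+1).choose j : R) * (α ^ (k+1-j) * β ^ j * s (n - ((k+1-j) * P + j * Q))) :=
          (pascal_sum k (fun j => α ^ (k+1-j) * β ^ j * s (n - ((k+1-j) * P + j * Q)))).symm

private lemma deep {R : Type*} [CommRing R] (p : ℕ) (hp : p.Prime) [CharP R p]
    (s : ℕ → R) (A B : R)
    (hbase : ∀ m, p + 1 ≤ m → s m = A * s (m - p) + B * s (m - (p+1))) :
    ∀ t n, (p+1) * p ^ t ≤ n →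
      s n = A ^ (p ^ t) * s (n - p * p ^ t) + B ^ (p ^ t) * s (n - (p+1) * p ^ t) := by
  intro t
  induction t with
  | zero => intro n hn; simpa using hbase n (by simpa using hn)
  | succ t IH =>
    intro n hn
    have hPQ : p * p ^ t ≤ (p+1) * p ^ t := Nat.mul_le_mul_right _ (Nat.le_succ p)
    have hn' : p * ((p+1) * p ^ t) ≤ n := by
      calc p * ((p+1) * p ^ t) = (p+1) * p ^ (t+1) := by ring
        _ ≤ n := hn
    have hiter := iter_sum s (A ^ p ^ t) (B ^ p ^ t) (p * p ^ t) ((p+1) * p ^ t) hPQ IH p n hn'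
    rw [hiter, Finset.sum_range_succ]
    have hz : ∀ j ∈ range p, j ≠ 0 →
        (p.choose j : R) * ((A ^ p ^ t) ^ (p - j) * (B ^ p ^ t) ^ j
          * s (n - ((p - j) * (p * p ^ t) + j * ((p+1) * p ^ t)))) = 0 := by
      intro j hj hj0
      have hc : (p.choose j : R) = 0 :=
        (CharP.cast_eq_zero_iff R p _).mpr (Nat.Prime.dvd_choose_self hp hj0 (mem_range.mp hj))
      rw [hc, zero_mul]
    rw [Finset.sum_eq_single_of_mem 0 (mem_range.mpr hp.pos) hz]
    simp only [Nat.choose_zero_right, Nat.cast_one, one_mul, Nat.sub_zero, pow_zero, mul_one,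
      Nat.choose_self, Nat.sub_self, zero_mul, zero_add]
    rw [← pow_mul, ← pow_mul,
      show p ^ t * p = p ^ (t+1) from (pow_succ p t).symm,
      show p * (p * p ^ t) = p * p ^ (t+1) by ring,
      show p * ((p+1) * p ^ t) = (p+1) * p ^ (t+1) by ring]
    simp


set_option maxHeartbeats 1000000 in
/-- The sequence in `𝔽_p[A,B]` defined by `s_0 = 1`, `s_n = 0` for `1 ≤ n ≤ p`, and
`s_n = A s_{n-p} + B s_{n-p-1}` for `n ≥ p+1`, vanishes at every `n ≥ 1` whose
base-`p` digit sum of `n(p-1)` equals `p-1`. (Here `A = X 0`, `B = X 1`.) -/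
theorem recurrence_vanishing_mod_p (p : ℕ) (hp : p.Prime)
    (s : ℕ → MvPolynomial (Fin 2) (ZMod p))
    (h0 : s 0 = 1)
    (hsmall : ∀ n, 1 ≤ n → n ≤ p → s n = 0)
    (hrec : ∀ n, p + 1 ≤ n →
      s n = MvPolynomial.X 0 * s (n - p) + MvPolynomial.X 1 * s (n - p - 1))
    (n : ℕ) (hn : 1 ≤ n) (hδ : (Nat.digits p (n * (p - 1))).sum = p - 1) :
    s n = 0 := by
  obtain ⟨e, rfl⟩ : ∃ e, p = e + 2 := ⟨p - 2, by have := hp.two_le; omega⟩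
  have h21 : e + 2 - 1 = e + 1 := by omega
  rw [h21] at hδ
  have hp2 : 2 ≤ e + 2 := by omega
  have hbase : ∀ m, (e+2) + 1 ≤ m →
      s m = MvPolynomial.X 0 * s (m - (e+2)) + MvPolynomial.X 1 * s (m - ((e+2)+1)) := by
    intro m hm
    rw [hrec m hm, Nat.sub_sub]
  have hdeepAll := deep (e+2) hp s (MvPolynomial.X 0) (MvPolynomial.X 1) hbase
  have main : ∀ N, 1 ≤ N → (Nat.digits (e+2) (N * (e+1))).sum = e + 1 → s N = 0 := by
    intro N
    induction N using Nat.strong_induction_on with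
    | _ N IH =>
      intro hN1 hNδ
      by_cases hsm : N ≤ e + 2
      · exact hsmall N hN1 hsm
      push_neg at hsm
      -- choose t maximal with (e+3) * (e+2)^t ≤ N
      set t := Nat.log (e+2) (N / (e+2+1)) with ht
      have hxx : (e+2) ^ t ≤ N / (e+2+1) :=
        Nat.pow_log_le_self (e+2) (by
          have h1le : 1 ≤ N / (e+2+1) := (Nat.one_le_div_iff (by omega)).mpr (by omega)
          omega)
      have h1 : (e+2+1) * (e+2) ^ t ≤ N := by
        have hmm := (Nat.le_div_iff_mul_le (show 0 < e+2+1 by omega)).mp hxx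
        calc (e+2+1) * (e+2) ^ t = (e+2) ^ t * (e+2+1) := by ring
          _ ≤ N := hmm
      have h2 : N < (e+2+1) * (e+2) ^ (t+1) := by
        have hlt := Nat.lt_pow_succ_log_self (show 1 < e+2 by omega) (N / (e+2+1))
        have hmm := (Nat.div_lt_iff_lt_mul (show 0 < e+2+1 by omega)).mp hlt
        calc N < (e+2) ^ (t+1) * (e+2+1) := hmm
          _ = (e+2+1) * (e+2) ^ (t+1) := by ring
      -- the quantity m and its base-(e+2) decomposition
      set m := N * (e+1) with hm_def
      have hmlow : (e+2+1) * (e+2) ^ t * (e+1) ≤ m := by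
        rw [hm_def]; exact Nat.mul_le_mul_right _ h1
      have hmhigh : m < (e+2+1) * (e+2) ^ (t+1) * (e+1) := by
        rw [hm_def]
        exact Nat.mul_lt_mul_of_lt_of_le h2 (le_refl (e+1)) (by omega)
      obtain ⟨q, r, hr, hqr⟩ : ∃ q r, r < (e+2) ^ (t+1) ∧ m = (e+2) ^ (t+1) * q + r :=
        ⟨m / (e+2) ^ (t+1), m % (e+2) ^ (t+1),
          Nat.mod_lt _ (pow_pos (by omega) _), (Nat.div_add_mod _ _).symm⟩
      obtain ⟨a, b, hb, hab⟩ : ∃ a b, b < e + 2 ∧ q = (e+2) * a + b :=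
        ⟨q / (e+2), q % (e+2), Nat.mod_lt _ (by omega), (Nat.div_add_mod _ _).symm⟩
      obtain ⟨r1, r0, hr0, hr10⟩ : ∃ r1 r0, r0 < (e+2) ^ t ∧ r = (e+2) ^ t * r1 + r0 :=
        ⟨r / (e+2) ^ t, r % (e+2) ^ t,
          Nat.mod_lt _ (pow_pos (by omega) _), (Nat.div_add_mod _ _).symm⟩
      have hr1 : r1 < e + 2 := by
        have : r < (e+2) ^ t * (e+2) := by rw [← pow_succ]; exact hr
        by_contra hcon
        push_neg at hcon
        have : (e+2) ^ t * (e+2) ≤ (e+2) ^ t * r1 := Nat.mul_le_mul_left _ hcon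
        omega
      -- q < (e+2)^2, hence a < e+2
      have hq_ub : q < (e+2) * (e+2) := by
        have hm3 : m < (e+2) * (e+2) * (e+2) ^ (t+1) := by
          calc m < (e+2+1) * (e+2) ^ (t+1) * (e+1) := hmhigh
            _ = ((e+3) * (e+1)) * (e+2) ^ (t+1) := by ring
            _ ≤ ((e+2) * (e+2)) * (e+2) ^ (t+1) :=
                Nat.mul_le_mul_right _ (by nlinarith)
        have hm4 : (e+2) ^ (t+1) * q < (e+2) ^ (t+1) * ((e+2) * (e+2)) := by
          calc (e+2) ^ (t+1) * q ≤ m := by omega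
            _ < (e+2) * (e+2) * (e+2) ^ (t+1) := hm3
            _ = (e+2) ^ (t+1) * ((e+2) * (e+2)) := by ring
        exact Nat.lt_of_mul_lt_mul_left hm4
      have ha_ub : a < e + 2 := by
        have : (e+2) * a < (e+2) * (e+2) := by omega
        exact Nat.lt_of_mul_lt_mul_left this
      -- digit sum decompositions
      have hδm : (Nat.digits (e+2) m).sum
          = (Nat.digits (e+2) q).sum + (Nat.digits (e+2) r).sum := by
        rw [show m = q * (e+2) ^ (t+1) + r by rw [hqr]; ring]
        exact digits_sum_add hp2 (t+1) q r hr
      have hδq : (Nat.digits (e+2) q).sum = a + b := by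
        rw [show q = a * (e+2) ^ 1 + b by rw [pow_one, hab]; ring]
        rw [digits_sum_add hp2 1 a b (by rwa [pow_one]),
          digits_sum_single hp2 ha_ub, digits_sum_single hp2 hb]
      have hδr : (Nat.digits (e+2) r).sum = r1 + (Nat.digits (e+2) r0).sum := by
        rw [show r = r1 * (e+2) ^ t + r0 by rw [hr10]; ring]
        rw [digits_sum_add hp2 t r1 r0 hr0, digits_sum_single hp2 hr1]
      have hEδ : a + b + r1 + (Nat.digits (e+2) r0).sum = e + 1 := by omega
      -- lower bound forcing a ≥ 1
      have hmlb : (e+1) * (e+2) ^ (t+1) < m := by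
        calc (e+1) * (e+2) ^ (t+1) < (e+2+1) * (e+2) ^ t * (e+1) := by
              have hps : (e+2) ^ (t+1) = (e+2) ^ t * (e+2) := pow_succ _ _
              have hppos : 0 < (e+2) ^ t := pow_pos (by omega) _
              nlinarith
          _ ≤ m := hmlow
      have hq_ge : e + 2 ≤ q := by
        by_contra hqlt
        push_neg at hqlt
        have hδq' : (Nat.digits (e+2) q).sum = q := digits_sum_single hp2 hqlt
        have hqe : q = e + 1 := by
          by_contra hq2
          have hq3 : q ≤ e := by omega
          have : m < (e+1) * (e+2) ^ (t+1) := by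
            calc m = (e+2) ^ (t+1) * q + r := hqr
              _ < (e+2) ^ (t+1) * q + (e+2) ^ (t+1) := by omega
              _ = (q+1) * (e+2) ^ (t+1) := by ring
              _ ≤ (e+1) * (e+2) ^ (t+1) := Nat.mul_le_mul_right _ (by omega)
          omega
        have hδr0 : (Nat.digits (e+2) r).sum = 0 := by omega
        have hre : r = 0 := sum_digits_eq_zero hp2 hδr0
        have hmeq : m = (e+1) * (e+2) ^ (t+1) := by
          rw [hqr, hqe, hre]; ring
        omega
      have ha1 : 1 ≤ a := by
        by_contra hcon
        push_neg at hcon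
        have ha0 : a = 0 := by omega
        rw [ha0] at hab
        omega
      obtain ⟨a', rfl⟩ : ∃ a', a = a' + 1 := ⟨a - 1, by omega⟩
      have hb_le : b ≤ e := by omega
      have hr1_le : r1 ≤ e := by omega
      -- the two smaller indices
      have hm1 : (N - (e+2) * (e+2) ^ t) * (e+1)
          = a' * (e+2) ^ (t+2) + ((b+1) * (e+2) ^ (t+1) + r) := by
        rw [Nat.sub_mul, ← hm_def]
        apply Nat.sub_eq_of_eq_add
        rw [hqr, hab]
        ring
      have hm2 : (N - (e+2+1) * (e+2) ^ t) * (e+1)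
          = a' * (e+2) ^ (t+2) + (b * (e+2) ^ (t+1) + ((r1+1) * (e+2) ^ t + r0)) := by
        rw [Nat.sub_mul, ← hm_def]
        apply Nat.sub_eq_of_eq_add
        rw [hqr, hab, hr10]
        ring
      -- digit sums of the smaller indices
      have hin1 : (b+1) * (e+2) ^ (t+1) + r < (e+2) ^ (t+2) := by
        calc (b+1) * (e+2) ^ (t+1) + r
            < (b+1) * (e+2) ^ (t+1) + (e+2) ^ (t+1) := by omega
          _ = (b+2) * (e+2) ^ (t+1) := by ring
          _ ≤ (e+2) * (e+2) ^ (t+1) := Nat.mul_le_mul_right _ (by omega)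
          _ = (e+2) ^ (t+2) := by ring
      have hin2a : (r1+1) * (e+2) ^ t + r0 < (e+2) ^ (t+1) := by
        calc (r1+1) * (e+2) ^ t + r0 < (r1+1) * (e+2) ^ t + (e+2) ^ t := by omega
          _ = (r1+2) * (e+2) ^ t := by ring
          _ ≤ (e+2) * (e+2) ^ t := Nat.mul_le_mul_right _ (by omega)
          _ = (e+2) ^ (t+1) := by ring
      have hin2 : b * (e+2) ^ (t+1) + ((r1+1) * (e+2) ^ t + r0) < (e+2) ^ (t+2) := by
        calc b * (e+2) ^ (t+1) + ((r1+1) * (e+2) ^ t + r0)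
            < b * (e+2) ^ (t+1) + (e+2) ^ (t+1) := by omega
          _ = (b+1) * (e+2) ^ (t+1) := by ring
          _ ≤ (e+2) * (e+2) ^ (t+1) := Nat.mul_le_mul_right _ (by omega)
          _ = (e+2) ^ (t+2) := by ring
      have hδ1 : (Nat.digits (e+2) ((N - (e+2) * (e+2) ^ t) * (e+1))).sum = e + 1 := by
        rw [hm1, digits_sum_add hp2 (t+2) a' _ hin1,
          digits_sum_add hp2 (t+1) (b+1) r hr,
          digits_sum_single hp2 (show a' < e + 2 by omega),
          digits_sum_single hp2 (show b + 1 < e + 2 by omega)]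
        omega
      have hδ2 : (Nat.digits (e+2) ((N - (e+2+1) * (e+2) ^ t) * (e+1))).sum = e + 1 := by
        rw [hm2, digits_sum_add hp2 (t+2) a' _ hin2,
          digits_sum_add hp2 (t+1) b _ hin2a,
          digits_sum_add hp2 t (r1+1) r0 hr0,
          digits_sum_single hp2 (show a' < e + 2 by omega),
          digits_sum_single hp2 (show b < e + 2 by omega),
          digits_sum_single hp2 (show r1 + 1 < e + 2 by omega)]
        omega
      -- positivity of the smaller indices
      have hptpos : 1 ≤ (e+2) ^ t := Nat.one_le_pow _ _ (by omega)
      have hsum1 : (e+2) * (e+2) ^ t + (e+2) ^ t ≤ N := by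
        calc (e+2) * (e+2) ^ t + (e+2) ^ t = (e+2+1) * (e+2) ^ t := by ring
          _ ≤ N := h1
      have hN1pos : 1 ≤ N - (e+2) * (e+2) ^ t := by omega
      have hN2pos : 1 ≤ N - (e+2+1) * (e+2) ^ t := by
        rcases Nat.eq_zero_or_pos (N - (e+2+1) * (e+2) ^ t) with h0' | hgt
        · exfalso
          have hz : (N - (e+2+1) * (e+2) ^ t) * (e+1) = 0 := by rw [h0']; ring
          rw [hm2] at hz
          have h5 : 1 ≤ (r1+1) * (e+2) ^ t := Nat.mul_pos (by omega) (by positivity)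
          omega
        · exact hgt
      have hN1lt : N - (e+2) * (e+2) ^ t < N := Nat.sub_lt (by omega) (by positivity)
      have hN2lt : N - (e+2+1) * (e+2) ^ t < N := Nat.sub_lt (by omega) (by positivity)
      -- conclude via the deep recurrence
      have hd := hdeepAll t N h1
      rw [hd, IH _ hN1lt hN1pos hδ1, IH _ hN2lt hN2pos hδ2, mul_zero, mul_zero, add_zero]
  exact main n hn hδ
end

section
/- Let $p \ge 5$ be a prime and $n \ge 1$. Then the classical normalized Eisenstein series satisfy the $q$-expansion congruence $E_{n(p-1)} \equiv E_{p-1}^n \pmod{p^2}$, i.e., all coefficients of the formal power series $E_{n(p-1)}(q) - E_{p-1}(q)^n \in \mathbb{Z}_p[[q]]$ lie in $p^2 \mathbb{Z}_p$. -/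
/-!
Write `E_k = 1 + a_k S_{k-1}` with `a_k = -2k / B_k` and `S_j = ∑ σ_j(m) q^m ∈ ℤ[[q]]`.
For `(p - 1) ∣ k`, von Staudt–Clausen says `B_k + 1/p` is a `p`-adic integer, so `‖B_k‖ = p`,
`1/B_k ≡ -p` and `a_k ≡ 2kp (mod p²)`. Hence `p ∣ a_{p-1}` and `a_{n(p-1)} ≡ n a_{p-1} (mod p²)`,
while Fermat's little theorem gives `S_{n(p-1)-1} ≡ S_{p-2} (mod p)`. Since `p ∣ a_{p-1}`,
`(1 + a_{p-1} S_{p-2})^n ≡ 1 + n a_{p-1} S_{p-2} (mod p²)`, and the two congruences combine to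
`E_{n(p-1)} ≡ E_{p-1}^n (mod p²)` in `ℤ_[p][[q]]`.
-/

open PowerSeries

/-- The `q`-expansion of the classical normalized Eisenstein series `E_k`, as a formal
power series with coefficients in `ℚ_p`:
`E_k = 1 - (2k / B_k) ∑_{m ≥ 1} σ_{k-1}(m) q^m`. -/
noncomputable def eisenstein (p : ℕ) [Fact p.Prime] (k : ℕ) : PowerSeries ℚ_[p] :=
  PowerSeries.mk fun m =>
    if m = 0 then 1
    else -(2 * (k : ℚ_[p]) / (bernoulli k : ℚ_[p])) * ((∑ d ∈ m.divisors, d ^ (k - 1) : ℕ) : ℚ_[p])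

open Finset
open scoped ArithmeticFunction.sigma

theorem sq_dvd_one_add_pow_sub {R : Type*} [CommRing R] {π a : R} (h : π ∣ a) (n : ℕ) :
    π ^ 2 ∣ (1 + a) ^ n - (1 + n * a) := by
  refine (pow_dvd_pow_of_dvd h 2).trans ?_
  simpa [sub_sub, add_comm, mul_comm] using sq_dvd_add_pow_sub_sub a 1 n

theorem sq_dvd_one_add_mul_sub_pow {R : Type*} [CommRing R] {π c c' s s' : R} {n : ℕ}
    (hc : π ∣ c) (hc' : π ^ 2 ∣ c' - n * c) (hs : π ∣ s' - s) :
    π ^ 2 ∣ (1 + c' * s') - (1 + c * s) ^ n := by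
  have hpow := sq_dvd_one_add_pow_sub (dvd_mul_of_dvd_left hc s) n
  have hmid : π ^ 2 ∣ n * c * (s' - s) := by
    rw [sq]
    exact mul_dvd_mul (dvd_mul_of_dvd_right hc _) hs
  have key : (1 + c' * s') - (1 + c * s) ^ n
      = (c' - n * c) * s' + n * c * (s' - s) - ((1 + c * s) ^ n - (1 + n * (c * s))) := by ring
  rw [key]
  exact dvd_sub (dvd_add (dvd_mul_of_dvd_left hc' _) hmid) hpow

theorem PowerSeries.C_dvd_iff_dvd_coeff {R : Type*} [CommSemiring R] (r : R) (φ : PowerSeries R) :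
    C r ∣ φ ↔ ∀ n, r ∣ coeff n φ := by
  constructor
  · rintro ⟨ψ, rfl⟩ n
    rw [coeff_C_mul]
    exact dvd_mul_right _ _
  · intro h
    choose ψ hψ using h
    exact ⟨mk ψ, by ext n; rw [coeff_C_mul, coeff_mk, hψ]⟩

theorem PadicInt.norm_le_pow_iff_dvd {p : ℕ} [Fact p.Prime] (x : ℤ_[p]) (n : ℕ) :
    ‖x‖ ≤ (p : ℝ) ^ (-n : ℤ) ↔ (p : ℤ_[p]) ^ n ∣ x := by
  rw [norm_le_pow_iff_mem_span_pow, Ideal.mem_span_singleton]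

theorem Padic.norm_coeff_map_le_of_pow_dvd {p : ℕ} [Fact p.Prime] {r : ℕ}
    {f : PowerSeries ℤ_[p]} (h : (p : PowerSeries ℤ_[p]) ^ r ∣ f) (m : ℕ) :
    ‖coeff m (map (algebraMap ℤ_[p] ℚ_[p]) f)‖ ≤ (p : ℝ) ^ (-r : ℤ) := by
  rw [← map_natCast C, ← map_pow, C_dvd_iff_dvd_coeff] at h
  exact (PadicInt.norm_le_pow_iff_dvd _ r).2 (h m)

theorem Padic.norm_bernoulli_add_inv_le_one {p : ℕ} [Fact p.Prime] {k : ℕ} (hk : Even k)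
    (hk0 : k ≠ 0) (hpk : p - 1 ∣ k) :
    ‖(bernoulli k : ℚ_[p]) + (p : ℚ_[p])⁻¹‖ ≤ 1 := by
  obtain ⟨j, rfl⟩ := hk
  rw [← two_mul] at hpk hk0 ⊢
  obtain ⟨z, hz⟩ := Bernoulli.vonStaudt_clausen j
  set S := {q ∈ range (2 * j + 2) | q.Prime ∧ q - 1 ∣ 2 * j}
  have hpS : p ∈ S := by
    have := Nat.le_of_dvd (Nat.pos_of_ne_zero hk0) hpk
    simp only [S, mem_filter, mem_range]
    exact ⟨by omega, Fact.out, hpk⟩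
  rw [← sum_erase_add _ _ hpS] at hz
  have hsplit : (bernoulli (2 * j) : ℚ_[p]) + (p : ℚ_[p])⁻¹
      = z - ∑ q ∈ S.erase p, (q : ℚ_[p])⁻¹ := by
    have := congrArg (fun x : ℚ => (x : ℚ_[p])) hz
    push_cast [one_div] at this
    linear_combination -this
  rw [hsplit, ← PadicInt.mem_subring_iff]
  refine Subring.sub_mem _ (intCast_mem _ z) (Subring.sum_mem _ fun q hq => ?_)
  obtain ⟨hqp, hqS⟩ := mem_erase.1 hq
  have hq1 : ‖(q : ℚ_[p])‖ = 1 := Padic.norm_natCast_eq_one_iff.2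
    ((Nat.coprime_primes Fact.out (mem_filter.1 hqS).2.1).2 hqp.symm)
  rw [PadicInt.mem_subring_iff, norm_inv, hq1, inv_one]

theorem Padic.norm_inv_add_le_of_norm_add_inv_le_one {p : ℕ} [Fact p.Prime] {x : ℚ_[p]}
    (hx : ‖x + (p : ℚ_[p])⁻¹‖ ≤ 1) : ‖x⁻¹ + p‖ ≤ (p : ℝ) ^ (-2 : ℤ) := by
  set c := x + (p : ℚ_[p])⁻¹
  have hp1 : (1 : ℝ) < p := by exact_mod_cast (Fact.out : p.Prime).one_lt
  have hp0 : (p : ℚ_[p]) ≠ 0 := by exact_mod_cast (Fact.out : p.Prime).ne_zero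
  have hxc : x = c + -(p : ℚ_[p])⁻¹ := by ring
  have hx_norm : ‖x‖ = p := by
    have : ‖-(p : ℚ_[p])⁻¹‖ = p := by rw [norm_neg, norm_inv, Padic.norm_p, inv_inv]
    rw [hxc, IsUltrametricDist.norm_add_eq_max_of_norm_ne_norm (by linarith), this]
    exact max_eq_right (by linarith)
  have hx0 : x ≠ 0 := norm_ne_zero_iff.1 (by linarith)
  have hinv : x⁻¹ + p = p * c * x⁻¹ := by
    simp only [c]; field_simp; ring
  rw [hinv, norm_mul, norm_mul, norm_inv, hx_norm, Padic.norm_p]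
  calc (p : ℝ)⁻¹ * ‖c‖ * (p : ℝ)⁻¹ ≤ (p : ℝ)⁻¹ * 1 * (p : ℝ)⁻¹ := by gcongr
    _ = (p : ℝ) ^ (-2 : ℤ) := by rw [mul_one, ← sq, zpow_neg, inv_pow]; norm_cast

theorem exists_padicInt_eq_neg_two_mul_div_bernoulli {p : ℕ} [Fact p.Prime] {k : ℕ} (hk : Even k)
    (hk0 : k ≠ 0) (hpk : p - 1 ∣ k) :
    ∃ α : ℤ_[p], (α : ℚ_[p]) = -(2 * k / bernoulli k) ∧ (p : ℤ_[p]) ^ 2 ∣ α - 2 * k * p := by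
  set a : ℚ_[p] := -(2 * k / bernoulli k)
  have hB := Padic.norm_inv_add_le_of_norm_add_inv_le_one
    (Padic.norm_bernoulli_add_inv_le_one (p := p) hk hk0 hpk)
  have h2k : ‖(2 * k : ℚ_[p])‖ ≤ 1 := by simpa using Padic.norm_int_le_one (p := p) (2 * k)
  have hdiff : ‖a - 2 * k * p‖ ≤ (p : ℝ) ^ (-2 : ℤ) :=
    calc ‖a - 2 * k * p‖ = ‖(2 * k : ℚ_[p])‖ * ‖(bernoulli k : ℚ_[p])⁻¹ + p‖ := by
          rw [← norm_mul, ← norm_neg]; congr 1; simp only [a]; ring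
      _ ≤ 1 * (p : ℝ) ^ (-2 : ℤ) := by gcongr
      _ = (p : ℝ) ^ (-2 : ℤ) := one_mul _
  have ha : ‖a‖ ≤ 1 := by
    have hp1 : (1 : ℝ) ≤ p := by exact_mod_cast (Fact.out : p.Prime).one_lt.le
    rw [← sub_add_cancel a (2 * k * p)]
    refine (IsUltrametricDist.norm_add_le_max _ _).trans (max_le ?_ ?_)
    · exact hdiff.trans (zpow_le_one_of_nonpos₀ hp1 (by norm_num))
    · simpa using Padic.norm_int_le_one (p := p) (2 * k * p)
  refine ⟨⟨a, ha⟩, rfl, ?_⟩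
  rw [← PadicInt.norm_le_pow_iff_dvd]
  exact hdiff

theorem ZMod.pow_add_mul_card_sub_one {p : ℕ} [Fact p.Prime] (x : ZMod p) {a : ℕ} (ha : a ≠ 0)
    (j : ℕ) : x ^ (a + (p - 1) * j) = x ^ a := by
  rcases eq_or_ne x 0 with rfl | hx
  · rw [zero_pow ha, zero_pow (by omega)]
  · rw [pow_add, pow_mul, ZMod.pow_card_sub_one_eq_one hx, one_pow, mul_one]

theorem ArithmeticFunction.natCast_sigma_add_mul_card_sub_one (p : ℕ) [Fact p.Prime] {a : ℕ}
    (ha : a ≠ 0) (j m : ℕ) : (σ (a + (p - 1) * j) m : ZMod p) = σ a m := by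
  simp only [sigma_apply, Nat.cast_sum, Nat.cast_pow, ZMod.pow_add_mul_card_sub_one _ ha]

noncomputable def sigmaSeries (R : Type*) [Semiring R] (k : ℕ) : PowerSeries R :=
  PowerSeries.mk fun m => (σ k m : R)

theorem natCast_dvd_sigmaSeries_sub {R : Type*} [CommRing R] (p : ℕ) [Fact p.Prime] {a : ℕ}
    (ha : a ≠ 0) (j : ℕ) :
    (p : PowerSeries R) ∣ sigmaSeries R (a + (p - 1) * j) - sigmaSeries R a := by
  rw [← map_natCast C, C_dvd_iff_dvd_coeff]
  intro m
  have h := ArithmeticFunction.natCast_sigma_add_mul_card_sub_one p ha j m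
  rw [← Int.cast_natCast, ← Int.cast_natCast (R := ZMod p) (σ a m : ℕ),
    ZMod.intCast_eq_intCast_iff_dvd_sub] at h
  simpa [sigmaSeries] using (Int.cast_dvd_cast (α := R) _ _ h).neg_right

theorem eisenstein_eq_map {p : ℕ} [Fact p.Prime] {k : ℕ} {α : ℤ_[p]}
    (hα : (α : ℚ_[p]) = -(2 * k / bernoulli k)) :
    eisenstein p k = map (algebraMap ℤ_[p] ℚ_[p]) (1 + C α * sigmaSeries ℤ_[p] (k - 1)) := by
  ext m
  rw [coeff_map, map_add, coeff_one, coeff_C_mul, sigmaSeries, coeff_mk, eisenstein, coeff_mk]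
  rcases eq_or_ne m 0 with rfl | hm
  · simp
  · simp [hm, hα, ArithmeticFunction.sigma_apply]

/-- For a prime `p ≥ 5` and `n ≥ 1`, the congruence `E_{n(p-1)} ≡ E_{p-1}^n (mod p²)`
holds coefficientwise: every coefficient of the difference has `p`-adic norm `≤ p^{-2}`. -/
theorem eisenstein_congruence_pow (p : ℕ) [Fact p.Prime] (hp5 : 5 ≤ p)
    (n : ℕ) (hn : 1 ≤ n) (m : ℕ) :
    ‖PowerSeries.coeff m (eisenstein p (n * (p - 1)) - (eisenstein p (p - 1)) ^ n)‖
      ≤ (p : ℝ) ^ (-2 : ℤ) := by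
  have hk : Even (p - 1) := (Fact.out : p.Prime).even_sub_one (by omega)
  obtain ⟨α, hα, hαp⟩ := exists_padicInt_eq_neg_two_mul_div_bernoulli hk (by omega) dvd_rfl
  obtain ⟨A, hA, hAp⟩ := exists_padicInt_eq_neg_two_mul_div_bernoulli (hk.mul_left n)
    (Nat.mul_ne_zero (by omega) (by omega)) (dvd_mul_left _ _)
  have hα_dvd : (p : ℤ_[p]) ∣ α := by
    have : (p : ℤ_[p]) ∣ α - 2 * (p - 1 : ℕ) * p := (dvd_pow_self _ two_ne_zero).trans hαp
    simpa using this.add (dvd_mul_left (p : ℤ_[p]) (2 * (p - 1 : ℕ)))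
  have hA_sub : (p : ℤ_[p]) ^ 2 ∣ A - n * α := by
    have key : A - n * α = (A - 2 * (n * (p - 1) : ℕ) * p) - n * (α - 2 * (p - 1 : ℕ) * p) := by
      push_cast; ring
    rw [key]
    exact hAp.sub (hαp.mul_left _)
  have hweight : n * (p - 1) - 1 = (p - 1 - 1) + (p - 1) * (n - 1) := by
    obtain ⟨n, rfl⟩ := Nat.exists_eq_add_of_le' hn
    rw [Nat.add_sub_cancel, mul_comm, mul_add_one]
    omega
  have hcong := sq_dvd_one_add_mul_sub_pow (n := n)
    (by simpa only [map_natCast] using map_dvd C hα_dvd)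
    (by simpa only [map_pow, map_natCast, map_sub, map_mul] using map_dvd C hA_sub)
    (hweight ▸ natCast_dvd_sigmaSeries_sub (R := ℤ_[p]) p (by omega) (n - 1))
  rw [eisenstein_eq_map hA, eisenstein_eq_map hα, ← map_pow, ← map_sub]
  exact_mod_cast Padic.norm_coeff_map_le_of_pow_dvd hcong m
end

section
/- Fix a prime $p$ and formal variables $y_1, \dots, y_{p+1}$. In $\mathbb{Q}_p[y_1,\dots,y_{p+1}]$ define $x_0 := 1$ and $x_n := \frac{1}{n}\sum_{i=1}^{n}(-1)^{i-1} x_{n-i} y_i$ for $1 \le n \le p+1$. Let $\Phi : \mathbb{Q}_p[y_1,\dots,y_{p+1}] \to \mathbb{Q}_p[t_1,\dots,t_{p+1}]$ be the $\mathbb{Q}_p$-algebra homomorphism with $\Phi(y_n) = p t_n$ for $1 \le n \le p$ and $\Phi(y_{p+1}) = t_{p+1}$. Then $\Phi(x_n) \in \mathbb{Z}_p[t_1,\dots,t_{p+1}]$ for all $1 \le n \le p+1$. -/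
open MvPolynomial

/-- The algebra map `Φ : ℚ_p[y_1, …, y_{p+1}] → ℚ_p[t_1, …, t_{p+1}]` (realized over `ℚ`,
on polynomial rings with variables indexed by `ℕ`, variable `i` standing for `y_i`
resp. `t_i`), sending `y_i ↦ p t_i` for `i ≤ p` and `y_{p+1} ↦ t_{p+1}`. -/
noncomputable def Phi (p : ℕ) : MvPolynomial ℕ ℚ →ₐ[ℚ] MvPolynomial ℕ ℚ :=
  MvPolynomial.aeval fun i =>
    if i ≤ p then (p : MvPolynomial ℕ ℚ) * MvPolynomial.X i else MvPolynomial.X i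

/-- The subring of `ℚ` of `p`-integral rationals. -/
def padicIntSubring (p : ℕ) [Fact p.Prime] : Subring ℚ where
  carrier := {q | padicNorm p q ≤ 1}
  one_mem' := by simp [padicNorm.one]
  zero_mem' := by simp [padicNorm.zero]
  mul_mem' := fun {a b} ha hb => by
    simp only [Set.mem_setOf_eq, padicNorm.mul] at *
    exact mul_le_one₀ ha (padicNorm.nonneg _) hb
  add_mem' := fun {a b} ha hb =>
    le_trans padicNorm.nonarchimedean (max_le ha hb)
  neg_mem' := fun {a} ha => by simpa [padicNorm.neg] using ha

/-- The subring of `MvPolynomial ℕ ℚ` of polynomials all of whose coefficients are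
`p`-integral. -/
noncomputable def padicIntCoeffs (p : ℕ) [Fact p.Prime] : Subring (MvPolynomial ℕ ℚ) where
  carrier := {f | ∀ m, MvPolynomial.coeff m f ∈ padicIntSubring p}
  one_mem' := fun m => by
    rw [MvPolynomial.coeff_one]
    split <;> simp [Subring.one_mem, Subring.zero_mem]
  zero_mem' := fun m => by simp [Subring.zero_mem]
  mul_mem' := fun {a b} ha hb m => by
    rw [MvPolynomial.coeff_mul]
    exact Subring.sum_mem _ fun c _ => Subring.mul_mem _ (ha _) (hb _)
  add_mem' := fun {a b} ha hb m => by
    rw [MvPolynomial.coeff_add]; exact Subring.add_mem _ (ha m) (hb m)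
  neg_mem' := fun {a} ha m => by
    rw [MvPolynomial.coeff_neg]; exact Subring.neg_mem _ (ha m)

/-- Newton's recursion: `x_0 = 1`, `x_n = (1/n) ∑_{i=1}^n (-1)^{i-1} x_{n-i} y_i` for
`1 ≤ n ≤ p+1`. Then `Φ(x_n)` has `p`-integral coefficients for `1 ≤ n ≤ p+1`. -/
theorem phi_integrality (p : ℕ) (hp : p.Prime)
    (x : ℕ → MvPolynomial ℕ ℚ)
    (hx0 : x 0 = 1)
    (hxr : ∀ n, 1 ≤ n → n ≤ p + 1 →
      x n = (n : ℚ)⁻¹ • ∑ i ∈ Finset.range n,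
        (-1 : MvPolynomial ℕ ℚ) ^ i * x (n - (i + 1)) * MvPolynomial.X (i + 1))
    (n : ℕ) (h1 : 1 ≤ n) (h2 : n ≤ p + 1) (m : ℕ →₀ ℕ) :
    MvPolynomial.coeff m (Phi p (x n)) = 0 ∨
      0 ≤ padicValRat p (MvPolynomial.coeff m (Phi p (x n))) := by
  haveI : Fact p.Prime := ⟨hp⟩
  have hXmem : ∀ j : ℕ, (X j : MvPolynomial ℕ ℚ) ∈ padicIntCoeffs p := by
    intro j m
    rw [MvPolynomial.coeff_X']
    split <;> simp [Subring.one_mem, Subring.zero_mem, padicIntSubring]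
  have hCmem : ∀ c : ℚ, c ∈ padicIntSubring p → (C c : MvPolynomial ℕ ℚ) ∈ padicIntCoeffs p := by
    intro c hc m
    rw [MvPolynomial.coeff_C]
    split
    · exact hc
    · exact Subring.zero_mem _
  have hval : ∀ c : ℚ, c ≠ 0 → 0 ≤ padicValRat p c → c ∈ padicIntSubring p := by
    intro c hc hv
    show padicNorm p c ≤ 1
    rw [padicNorm.eq_zpow_of_nonzero hc]
    exact zpow_le_one_of_nonpos₀ (by exact_mod_cast hp.one_le) (by omega)
  have key : ∀ n, n ≤ p + 1 → Phi p (x n) ∈ padicIntCoeffs p := by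
    intro n
    induction n using Nat.strong_induction_on with
    | _ n ih =>
      intro hn
      rcases Nat.eq_zero_or_pos n with h0 | h1'
      · subst h0; rw [hx0, map_one]; exact Subring.one_mem _
      · have hn0 : ((n : ℚ)) ≠ 0 := by exact_mod_cast h1'.ne'
        have hp0 : ((p : ℚ)) ≠ 0 := by exact_mod_cast hp.pos.ne'
        have hvn : padicValNat p n ≤ 1 := by
          by_contra h
          have hd : p ^ 2 ∣ n := dvd_trans (pow_dvd_pow p (by omega)) pow_padicValNat_dvd
          have := Nat.le_of_dvd h1' hd
          nlinarith [hp.two_le]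
        rw [hxr n h1' hn, map_smul, map_sum, Finset.smul_sum]
        refine Subring.sum_mem _ fun i hi => ?_
        simp only [Finset.mem_range] at hi
        have hA : Phi p (x (n - (i + 1))) ∈ padicIntCoeffs p := ih _ (by omega) (by omega)
        have hΦX : Phi p (X (i + 1) : MvPolynomial ℕ ℚ) =
            if i + 1 ≤ p then (p : MvPolynomial ℕ ℚ) * X (i + 1) else X (i + 1) := by
          simp [Phi]
        rw [map_mul, map_mul, map_pow, map_neg, map_one, hΦX]
        have hneg : (-1 : MvPolynomial ℕ ℚ) ∈ padicIntCoeffs p :=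
          Subring.neg_mem _ (Subring.one_mem _)
        by_cases hip : i + 1 ≤ p
        · rw [if_pos hip]
          have heq : (n : ℚ)⁻¹ • ((-1 : MvPolynomial ℕ ℚ) ^ i * Phi p (x (n - (i + 1))) *
              ((p : MvPolynomial ℕ ℚ) * X (i + 1)))
              = C ((n : ℚ)⁻¹ * p) * ((-1 : MvPolynomial ℕ ℚ) ^ i *
                Phi p (x (n - (i + 1))) * X (i + 1)) := by
            rw [smul_eq_C_mul, C_mul]
            rw [show ((p : MvPolynomial ℕ ℚ)) = C ((p : ℚ)) by simp]
            ring
          rw [heq]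
          refine Subring.mul_mem _ (hCmem _ (hval _ (by positivity) ?_)) (Subring.mul_mem _
            (Subring.mul_mem _ (Subring.pow_mem _ hneg i) hA) (hXmem _))
          rw [padicValRat.mul (inv_ne_zero hn0) hp0, padicValRat.inv,
            padicValRat.of_nat, padicValRat.self hp.one_lt]
          omega
        · rw [if_neg hip]
          have hvn0 : padicValNat p n = 0 := by
            have hnp : n = p + 1 := by omega
            refine padicValNat.eq_zero_of_not_dvd ?_
            rw [hnp]
            intro hd
            have h1d : p ∣ 1 := (Nat.dvd_add_right (dvd_refl p)).mp hd
            exact hp.one_lt.ne' (Nat.eq_one_of_dvd_one h1d)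
          have heq : (n : ℚ)⁻¹ • ((-1 : MvPolynomial ℕ ℚ) ^ i * Phi p (x (n - (i + 1))) *
              X (i + 1))
              = C ((n : ℚ)⁻¹) * ((-1 : MvPolynomial ℕ ℚ) ^ i *
                Phi p (x (n - (i + 1))) * X (i + 1)) := by
            rw [smul_eq_C_mul]
          rw [heq]
          refine Subring.mul_mem _ (hCmem _ (hval _ (inv_ne_zero hn0) ?_)) (Subring.mul_mem _
            (Subring.mul_mem _ (Subring.pow_mem _ hneg i) hA) (hXmem _))
          rw [padicValRat.inv, padicValRat.of_nat, hvn0]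
          simp
  have h := key n h2 m
  by_cases hc : MvPolynomial.coeff m (Phi p (x n)) = 0
  · exact Or.inl hc
  · refine Or.inr ?_
    have h' : padicNorm p (MvPolynomial.coeff m (Phi p (x n))) ≤ 1 := h
    rw [padicNorm.eq_zpow_of_nonzero hc] at h'
    by_contra h0
    push_neg at h0
    exact absurd h' (not_le.mpr (one_lt_zpow₀ (by exact_mod_cast hp.one_lt) (by omega)))
end

section
/- With notation as before ($x_n$ defined by Newton's recursion from $y_1,\dots,y_{p+1}$ over $\mathbb{Q}_p$, and $\Phi(y_n) = pt_n$ for $n \le p$, $\Phi(y_{p+1}) = t_{p+1}$), the mod-$p$ reductions of $\Phi(x_n) \in \mathbb{Z}_p[t_1,\dots,t_{p+1}]$ satisfy: $\overline{\Phi(x_n)} = 0$ for $1 \le n \le p-1$, $\overline{\Phi(x_p)} = \overline{t_p}$, and $\overline{\Phi(x_{p+1})} = -\overline{t_{p+1}}$. -/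
/-!
Filter `ℚ[t]` by the `p`-adic valuation of the coefficients. For `i ≤ p`, `Φ(y_i)` is divisible by
`p`, and `1/n` is `p`-integral for `n < p`, so Newton's recursion gives `Φ(x_n) ≡ 0` for
`1 ≤ n < p` by induction. In `p Φ(x_p)` every term but the last, `(-1)^(p-1) p t_p`, is divisible
by `p²`, hence `Φ(x_p) ≡ (-1)^(p-1) t_p`. In `(p+1) Φ(x_{p+1})` every term but the last,
`(-1)^p t_{p+1}`, is divisible by `p`, and `1/(p+1) ≡ 1`. Both signs are settled by Fermat's
little theorem `(-1)^p ≡ -1 (mod p)`.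
-/

open MvPolynomial

/-- A polynomial with `p`-integral coefficients reduces to `0` mod `p`:
each coefficient is `0` or has `p`-adic valuation `≥ 1`. -/
def CoeffsDivP (p : ℕ) (f : MvPolynomial ℕ ℚ) : Prop :=
  ∀ m : ℕ →₀ ℕ, MvPolynomial.coeff m f = 0 ∨ 1 ≤ padicValRat p (MvPolynomial.coeff m f)

open WithZero Finset

namespace MvPolynomial

variable {R Γ₀ σ : Type*} [CommRing R] [LinearOrderedCommGroupWithZero Γ₀] {v : Valuation R Γ₀}
  {γ δ : Γ₀} {f g : MvPolynomial σ R}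

lemma coeffsIn_leSubmodule_mono (h : γ ≤ δ) (hf : f ∈ coeffsIn σ (v.leSubmodule γ)) :
    f ∈ coeffsIn σ (v.leSubmodule δ) :=
  fun m => (hf m).trans h

lemma mul_mem_coeffsIn_leSubmodule (hf : f ∈ coeffsIn σ (v.leSubmodule γ))
    (hg : g ∈ coeffsIn σ (v.leSubmodule δ)) : f * g ∈ coeffsIn σ (v.leSubmodule (γ * δ)) := by
  classical
  intro m
  rw [coeff_mul]
  exact sum_mem fun a _ => by
    simpa only [Valuation.mem_leSubmodule_iff, map_mul] using mul_le_mul' (hf a.1) (hg a.2)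

lemma C_mem_coeffsIn_leSubmodule {c : R} : C c ∈ coeffsIn σ (v.leSubmodule γ) ↔ v c ≤ γ :=
  C_mem_coeffsIn

lemma one_mem_coeffsIn_leSubmodule_one : (1 : MvPolynomial σ R) ∈ coeffsIn σ (v.leSubmodule 1) :=
  one_coeffsIn.2 (by simp)

lemma X_mem_coeffsIn_leSubmodule_one (i : σ) :
    (X i : MvPolynomial σ R) ∈ coeffsIn σ (v.leSubmodule 1) :=
  monomial_mem_coeffsIn.2 (by simp)

lemma smul_mem_coeffsIn_leSubmodule {c : R} (hc : v c ≤ γ)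
    (hf : f ∈ coeffsIn σ (v.leSubmodule δ)) : c • f ∈ coeffsIn σ (v.leSubmodule (γ * δ)) := by
  rw [smul_eq_C_mul]
  exact mul_mem_coeffsIn_leSubmodule (C_mem_coeffsIn_leSubmodule.2 hc) hf

lemma neg_one_pow_mul_mem_coeffsIn {A : Type*} [CommRing A] [Module A R] {M : Submodule A R}
    (i : ℕ) (hf : f ∈ coeffsIn σ M) :
    (-1) ^ i * f ∈ coeffsIn σ M := by
  rcases neg_one_pow_eq_or (MvPolynomial σ R) i with h | h <;> simp [h, hf]

lemma C_natCast_inv_mul_natCast {K : Type*} [Field K] [CharZero K] {n : ℕ} (hn : n ≠ 0) :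
    C (n : K)⁻¹ * (n : MvPolynomial σ K) = 1 := by
  rw [← map_natCast C, ← map_mul, inv_mul_cancel₀ (by exact_mod_cast hn), map_one]

end MvPolynomial

namespace Rat

variable {p : ℕ} [Fact p.Prime]

lemma padicValuation_le_exp_neg_one_iff {q : ℚ} :
    padicValuation p q ≤ exp (-1) ↔ q = 0 ∨ 1 ≤ padicValRat p q := by
  by_cases hq : q = 0
  · simp [hq]
  · simp [padicValuation, hq, -exp_neg]

lemma padicValuation_natCast_of_not_dvd {n : ℕ} (h : ¬ p ∣ n) : padicValuation p n = 1 := by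
  rw [← Int.cast_natCast, padicValuation_cast, Int.padicValuation_eq_one_iff]
  exact_mod_cast h

lemma padicValuation_intCast_le_of_dvd {a : ℤ} (h : (p : ℤ) ∣ a) :
    padicValuation p a ≤ exp (-1) := by
  obtain ⟨b, rfl⟩ := h
  rw [Int.cast_mul, map_mul, Int.cast_natCast, padicValuation_self, padicValuation_cast]
  exact mul_le_of_le_one_right' (Int.padicValuation_le_one p b)

lemma padicValuation_pow_sub_self_le (a : ℤ) : padicValuation p (a ^ p - a) ≤ exp (-1) := by
  have h : (p : ℤ) ∣ a ^ p - a := by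
    rw [← ZMod.intCast_zmod_eq_zero_iff_dvd]
    push_cast
    rw [ZMod.pow_card, sub_self]
  exact_mod_cast padicValuation_intCast_le_of_dvd h

lemma padicValuation_neg_one_pow_add_one_le : padicValuation p ((-1) ^ p + 1) ≤ exp (-1) := by
  simpa using padicValuation_pow_sub_self_le (p := p) (-1)

end Rat

def NewtonRecursion (N : ℕ) (x : ℕ → MvPolynomial ℕ ℚ) : Prop :=
  ∀ n, 1 ≤ n → n ≤ N → x n = (n : ℚ)⁻¹ • ∑ i ∈ range n, (-1) ^ i * x (n - (i + 1)) * X (i + 1)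

lemma phi_X (p i : ℕ) : Phi p (X i) = if i ≤ p then (p : MvPolynomial ℕ ℚ) * X i else X i :=
  aeval_X _ i

lemma phi_newton {p : ℕ} {x : ℕ → MvPolynomial ℕ ℚ} (hxr : NewtonRecursion (p + 1) x) {n : ℕ}
    (h1 : 1 ≤ n) (h2 : n ≤ p + 1) :
    Phi p (x n) = (n : ℚ)⁻¹ •
      ∑ i ∈ range n, (-1) ^ i * Phi p (x (n - (i + 1))) * Phi p (X (i + 1)) := by
  simp only [hxr n h1 h2, map_smul, map_sum, map_mul, map_pow, map_neg, map_one]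

lemma phi_x_self_sub_X_eq {p : ℕ} {x : ℕ → MvPolynomial ℕ ℚ} (hx0 : x 0 = 1)
    (hxr : NewtonRecursion (p + 1) x) (hp : p ≠ 0) :
    Phi p (x p) - X p = (p : ℚ)⁻¹ •
      ∑ i ∈ range (p - 1), (-1) ^ i * Phi p (x (p - (i + 1))) * Phi p (X (i + 1)) -
        ((-1) ^ p + 1 : ℚ) • X p := by
  obtain ⟨q, rfl⟩ := Nat.exists_eq_add_one.2 (Nat.pos_of_ne_zero hp)
  rw [phi_newton hxr (by omega) (by omega), Nat.add_sub_cancel, sum_range_succ, Nat.sub_self, hx0,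
    map_one, phi_X, if_pos le_rfl, mul_one]
  have hinv := C_natCast_inv_mul_natCast (σ := ℕ) (K := ℚ) hp
  simp only [smul_eq_C_mul, map_add, map_pow, map_neg, map_one]
  linear_combination ((-1) ^ q * X (q + 1) : MvPolynomial ℕ ℚ) * hinv

lemma phi_x_succ_add_X_eq {p : ℕ} {x : ℕ → MvPolynomial ℕ ℚ} (hx0 : x 0 = 1)
    (hxr : NewtonRecursion (p + 1) x) :
    Phi p (x (p + 1)) + X (p + 1) = ((p + 1 : ℕ) : ℚ)⁻¹ •
      (∑ i ∈ range p, (-1) ^ i * Phi p (x (p + 1 - (i + 1))) * Phi p (X (i + 1)) +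
        ((-1) ^ p + 1 + p : ℚ) • X (p + 1)) := by
  rw [phi_newton hxr (by omega) le_rfl, sum_range_succ, Nat.sub_self, hx0, map_one, phi_X,
    if_neg (by omega), mul_one]
  have hinv := C_natCast_inv_mul_natCast (σ := ℕ) (K := ℚ) (n := p + 1) (by omega)
  simp only [smul_eq_C_mul, map_add, map_pow, map_neg, map_one, map_natCast]
  push_cast at hinv ⊢
  linear_combination (-X (p + 1) : MvPolynomial ℕ ℚ) * hinv

section PhiModP

variable {p : ℕ} [Fact p.Prime] {x : ℕ → MvPolynomial ℕ ℚ}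

/- `𝓘[γ]`: polynomials whose coefficients have valuation `≤ γ`. Valuations are multiplicative,
with `v p = ϖ = exp (-1)`, so `𝓘[1]` is `ℤ_(p)[t]` and `𝓘[ϖ]` is `p ℤ_(p)[t]`. -/
local notation "𝓘[" γ "]" => coeffsIn ℕ (Valuation.leSubmodule (Rat.padicValuation p) γ)
local notation "ϖ" => exp (-1 : ℤ)

lemma exp_neg_one_le_one : (ϖ : ℤᵐ⁰) ≤ 1 := by
  rw [← exp_zero]
  exact exp_le_exp.2 (by norm_num)

lemma phi_X_mem {i : ℕ} (hi : i ≤ p) : Phi p (X i) ∈ 𝓘[ϖ] := by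
  rw [phi_X, if_pos hi, ← map_natCast C, ← mul_one ϖ]
  exact mul_mem_coeffsIn_leSubmodule (C_mem_coeffsIn_leSubmodule.2 (by simp))
    (X_mem_coeffsIn_leSubmodule_one i)

lemma newton_term_mem {γ : ℤᵐ⁰} {i k : ℕ} (hi : i + 1 ≤ p) (hk : Phi p (x k) ∈ 𝓘[γ]) :
    (-1) ^ i * Phi p (x k) * Phi p (X (i + 1)) ∈ 𝓘[γ * ϖ] :=
  mul_mem_coeffsIn_leSubmodule (neg_one_pow_mul_mem_coeffsIn i hk) (phi_X_mem hi)

lemma phi_x_mem_of_lt (hx0 : x 0 = 1) (hxr : NewtonRecursion (p + 1) x) (n : ℕ) (h1 : 1 ≤ n)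
    (h2 : n < p) : Phi p (x n) ∈ 𝓘[ϖ] := by
  induction n using Nat.strong_induction_on with
  | _ n ih =>
    have hsum : ∑ i ∈ range n, (-1) ^ i * Phi p (x (n - (i + 1))) * Phi p (X (i + 1)) ∈
        𝓘[1 * ϖ] :=
      sum_mem fun i hi => by
        have hi := mem_range.1 hi
        refine newton_term_mem (by omega) ?_
        rcases Nat.eq_zero_or_pos (n - (i + 1)) with h | h
        · rw [h, hx0, map_one]
          exact one_mem_coeffsIn_leSubmodule_one
        · exact coeffsIn_leSubmodule_mono exp_neg_one_le_one (ih _ (by omega) h (by omega))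
    have hn : Rat.padicValuation p (n : ℚ)⁻¹ ≤ 1 := by
      rw [map_inv₀, Rat.padicValuation_natCast_of_not_dvd (Nat.not_dvd_of_pos_of_lt h1 h2), inv_one]
    rw [phi_newton hxr h1 (by omega)]
    simpa using smul_mem_coeffsIn_leSubmodule hn hsum

lemma phi_x_self_sub_X_mem (hx0 : x 0 = 1) (hxr : NewtonRecursion (p + 1) x) :
    Phi p (x p) - X p ∈ 𝓘[ϖ] := by
  have hp := (Fact.out : p.Prime).ne_zero
  have hS : ∑ i ∈ range (p - 1), (-1) ^ i * Phi p (x (p - (i + 1))) * Phi p (X (i + 1)) ∈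
      𝓘[ϖ * ϖ] := sum_mem fun i hi => by
    have hi := mem_range.1 hi
    exact newton_term_mem (by omega) (phi_x_mem_of_lt hx0 hxr _ (by omega) (by omega))
  have hpinv : Rat.padicValuation p (p : ℚ)⁻¹ ≤ ϖ⁻¹ := by
    rw [map_inv₀, Rat.padicValuation_self]
  rw [phi_x_self_sub_X_eq hx0 hxr hp]
  refine sub_mem ?_ ?_
  · have h := smul_mem_coeffsIn_leSubmodule hpinv hS
    rwa [inv_mul_cancel_left₀ (exp_ne_zero : ϖ ≠ 0)] at h
  · simpa using smul_mem_coeffsIn_leSubmodule Rat.padicValuation_neg_one_pow_add_one_le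
      (X_mem_coeffsIn_leSubmodule_one p)

lemma phi_x_mem_one_of_le (hx0 : x 0 = 1) (hxr : NewtonRecursion (p + 1) x) {n : ℕ}
    (hn : n ≤ p) : Phi p (x n) ∈ 𝓘[1] := by
  rcases Nat.eq_zero_or_pos n with rfl | h1
  · rw [hx0, map_one]
    exact one_mem_coeffsIn_leSubmodule_one
  rcases hn.lt_or_eq with h2 | rfl
  · exact coeffsIn_leSubmodule_mono exp_neg_one_le_one (phi_x_mem_of_lt hx0 hxr n h1 h2)
  · rw [← sub_add_cancel (Phi n (x n)) (X n)]
    exact add_mem (coeffsIn_leSubmodule_mono exp_neg_one_le_one (phi_x_self_sub_X_mem hx0 hxr))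
      (X_mem_coeffsIn_leSubmodule_one n)

lemma phi_x_succ_add_X_mem (hx0 : x 0 = 1) (hxr : NewtonRecursion (p + 1) x) :
    Phi p (x (p + 1)) + X (p + 1) ∈ 𝓘[ϖ] := by
  have hS : ∑ i ∈ range p, (-1) ^ i * Phi p (x (p + 1 - (i + 1))) * Phi p (X (i + 1)) ∈
      𝓘[1 * ϖ] := sum_mem fun i hi => by
    have hi := mem_range.1 hi
    exact newton_term_mem (by omega) (phi_x_mem_one_of_le hx0 hxr (by omega))
  have hfermat : Rat.padicValuation p ((-1) ^ p + 1 + p) ≤ ϖ :=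
    Valuation.map_add_le _ Rat.padicValuation_neg_one_pow_add_one_le (by simp)
  have hinv : Rat.padicValuation p ((p + 1 : ℕ) : ℚ)⁻¹ ≤ 1 := by
    rw [map_inv₀, Rat.padicValuation_natCast_of_not_dvd, inv_one]
    exact fun h => (Fact.out : p.Prime).not_dvd_one ((Nat.dvd_add_right dvd_rfl).1 h)
  have hX : ((-1) ^ p + 1 + p : ℚ) • X (p + 1) ∈ 𝓘[ϖ] := by
    simpa using smul_mem_coeffsIn_leSubmodule hfermat (X_mem_coeffsIn_leSubmodule_one (p + 1))
  rw [one_mul] at hS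
  rw [phi_x_succ_add_X_eq hx0 hxr, ← one_mul ϖ]
  exact smul_mem_coeffsIn_leSubmodule hinv (add_mem hS hX)

lemma coeffsDivP_of_mem {f : MvPolynomial ℕ ℚ} (hf : f ∈ 𝓘[ϖ]) : CoeffsDivP p f :=
  fun m => Rat.padicValuation_le_exp_neg_one_iff.1 (hf m)

end PhiModP

/-- Mod-`p` reductions of the `Φ(x_n)`: with `x_n` given by Newton's recursion,
`Φ(x_n) ≡ 0 (mod p)` for `1 ≤ n ≤ p-1`, `Φ(x_p) ≡ t_p (mod p)`, and
`Φ(x_{p+1}) ≡ -t_{p+1} (mod p)`. -/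
theorem phi_mod_p (p : ℕ) (hp : p.Prime)
    (x : ℕ → MvPolynomial ℕ ℚ)
    (hx0 : x 0 = 1)
    (hxr : ∀ n, 1 ≤ n → n ≤ p + 1 →
      x n = (n : ℚ)⁻¹ • ∑ i ∈ Finset.range n,
        (-1 : MvPolynomial ℕ ℚ) ^ i * x (n - (i + 1)) * MvPolynomial.X (i + 1)) :
    (∀ n, 1 ≤ n → n ≤ p - 1 → CoeffsDivP p (Phi p (x n))) ∧
    CoeffsDivP p (Phi p (x p) - MvPolynomial.X p) ∧
    CoeffsDivP p (Phi p (x (p + 1)) + MvPolynomial.X (p + 1)) := by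
  have := Fact.mk hp
  exact ⟨fun n h1 h2 =>
      coeffsDivP_of_mem (phi_x_mem_of_lt hx0 hxr n h1 (Nat.lt_of_le_pred hp.pos h2)),
    coeffsDivP_of_mem (phi_x_self_sub_X_mem hx0 hxr),
    coeffsDivP_of_mem (phi_x_succ_add_X_mem hx0 hxr)⟩
end

section
/- With the above setup (the elements $y_n$ for $n \ge p+2$ defined by the linear recurrence $y_n = \sum_{i=1}^{p+1}(-1)^{i-1} x_i y_{n-i}$, and $\Phi$ the map $y_i \mapsto pt_i$ for $i \le p$, $y_{p+1} \mapsto t_{p+1}$): for every $n \in \mathbb{N}$ with $\delta_p(n(p-1)) = p-1$, we have $\Phi(y_n) \in p\,\mathbb{Z}_p[t_1,\dots,t_{p+1}]$. -/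
/-!
Modulo `p`, the Newton recursion gives `Φ(x_i) ≡ 0` for `0 < i < p`, `Φ(x_p) ≡ (-1)^(p-1) t_p` and
`Φ(x_{p+1}) ≡ (-1)^p t_{p+1}`, so the recurrence for `y` reduces to
`Φ(y_n) ≡ t_p Φ(y_{n-p}) + t_{p+1} Φ(y_{n-p-1})`. Solving it, `Φ(y_{k+1}) ≡ t_{p+1} T_k` with
`T_k = ∑ C(m, j) t_p^(m-j) t_{p+1}^j` over `k = (m+1)p + j`.

Every such binomial coefficient is divisible by `p` when `δ_p((k+1)(p-1)) = p-1`. Otherwise, by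
Lucas' theorem, `j` is digitwise below `m`. Removing the last base-`p` digit of `(p-1)(k+1)`
leaves `δ_p((p-1)(m+1+⌊j/p⌋) + j mod p) ≤ j mod p`. This forces the last digit of `m + 1 + ⌊j/p⌋`
to be at most `m mod p`, i.e. a carry, after which the same inequality holds for
`(⌊m/p⌋, ⌊j/p⌋)`; descent on `m` gives a contradiction.
-/

open MvPolynomial

open Finset

namespace Nat

theorem digits_sum_add_mul {p : ℕ} (hp : 1 < p) {a : ℕ} (ha : a < p) (b : ℕ) :
    (digits p (a + p * b)).sum = a + (digits p b).sum := by
  rcases eq_or_ne a 0 with rfl | ha0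
  · rcases eq_or_ne b 0 with rfl | hb0
    · simp
    · rw [digits_add p hp 0 b ha (Or.inr hb0), List.sum_cons]
  · rw [digits_add p hp a b ha (Or.inl ha0), List.sum_cons]

/-- The last digit of `(p - 1) * (r + p * q) + k` is `k - r`, or `p + k - r` after a borrow. -/
theorem digits_sum_sub_one_mul_add_le {p r q k : ℕ} (hp : 1 < p) (hr : r < p) (hk : k < p)
    (h : (digits p ((p - 1) * (r + p * q) + k)).sum ≤ k) :
    r ≤ k ∧ (digits p ((p - 1) * q + r)).sum ≤ r := by
  obtain ⟨p, rfl⟩ : ∃ p', p = p' + 1 := ⟨p - 1, by omega⟩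
  rw [Nat.add_sub_cancel] at h ⊢
  by_cases hrk : r ≤ k
  · have hN : p * (r + (p + 1) * q) + k = (k - r) + (p + 1) * (p * q + r) := by
      zify [hrk]; ring
    rw [hN, digits_sum_add_mul hp (by omega)] at h
    exact ⟨hrk, by omega⟩
  · have hN : p * (r + (p + 1) * q) + k = (p + 1 + k - r) + (p + 1) * (p * q + r - 1) := by
      have : 1 ≤ p * q + r := by omega
      zify [this, show r ≤ p + 1 + k by omega]; ring
    rw [hN, digits_sum_add_mul hp (by omega)] at h
    omega

theorem not_digits_sum_le_of_not_dvd_choose {p : ℕ} [hp : Fact p.Prime] {m j : ℕ}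
    (hmj : ¬ p ∣ m.choose j) {k : ℕ} (hk : k ≤ j % p) :
    ¬ (digits p ((p - 1) * (m + 1 + j / p) + k)).sum ≤ k := by
  induction m using Nat.strong_induction_on generalizing j k with
  | _ m ih =>
  intro h
  have hp1 := hp.out.one_lt
  rw [(Choose.choose_modEq_choose_mod_mul_choose_div_nat (p := p)).dvd_iff dvd_rfl,
    hp.out.dvd_mul, not_or] at hmj
  obtain ⟨hmod, hdiv⟩ := hmj
  have hmod_le : j % p ≤ m % p := by
    by_contra hlt; exact hmod (by rw [choose_eq_zero_of_lt (by omega)]; exact dvd_zero p)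
  have hdiv_le : j / p ≤ m / p := by
    by_contra hlt; exact hdiv (by rw [choose_eq_zero_of_lt (by omega)]; exact dvd_zero p)
  have hm := Nat.mod_add_div m p
  have hj := Nat.mod_add_div (j / p) p
  have hjp := Nat.mod_lt (j / p) (by omega : 0 < p)
  have hmp := Nat.mod_lt m (by omega : 0 < p)
  by_cases hcarry : m % p + 1 + j / p % p < p
  · have hT : m + 1 + j / p = (m % p + 1 + j / p % p) + p * (m / p + j / p / p) := by
      rw [mul_add]; omega
    rw [hT] at h
    have := (digits_sum_sub_one_mul_add_le hp1 hcarry (by omega) h).1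
    omega
  · have hT : m + 1 + j / p = (m % p + 1 + j / p % p - p) + p * (m / p + 1 + j / p / p) := by
      rw [mul_add, mul_add]; omega
    rw [hT] at h
    obtain ⟨hle, h'⟩ := digits_sum_sub_one_mul_add_le hp1 (by omega) (by omega) h
    have hm0 : m ≠ 0 := by
      rintro rfl
      have : j / p = 0 := by simpa using hdiv_le
      simp [this] at hcarry
      omega
    exact ih (m / p) (Nat.div_lt_self (by omega) hp1) hdiv (by omega) h'

theorem dvd_choose_of_digits_sum_eq {p : ℕ} [hp : Fact p.Prime] {n m j : ℕ}
    (hδ : (digits p (n * (p - 1))).sum = p - 1) (hn : n = (m + 1) * p + j + 1) :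
    p ∣ m.choose j := by
  have hp1 := hp.out.one_lt
  by_contra hmj
  have hN : n * (p - 1) = (p - 1) * (j % p + p * (m + 1 + j / p)) + (p - 1) := by
    have hj : (m + 1) * p + j = j % p + p * (m + 1 + j / p) := by
      rw [mul_add, mul_comm (m + 1)]; have := Nat.mod_add_div j p; omega
    rw [hn, ← hj]; ring
  rw [hN] at hδ
  obtain ⟨-, h⟩ := digits_sum_sub_one_mul_add_le hp1 (Nat.mod_lt j (by omega)) (by omega) hδ.le
  exact not_digits_sum_le_of_not_dvd_choose hmj le_rfl h

end Nat

section CompositionSum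

variable {R : Type*} [CommSemiring R] (p : ℕ) (u v : R)

noncomputable def compositionTerm (k m : ℕ) : R :=
  if (m + 1) * p ≤ k then
    m.choose (k - (m + 1) * p) * u ^ (m - (k - (m + 1) * p)) * v ^ (k - (m + 1) * p)
  else 0

/-- `compositionSum p u v k = ∑ C(m, j) u^(m-j) v^j` over `k = (m + 1) * p + j`: for `p ≤ k`, the
sum over all words in `u` of weight `p` and `v` of weight `p + 1` of total weight `k - p`. -/
noncomputable def compositionSum (k : ℕ) : R :=
  ∑ m ∈ range (k + 1), compositionTerm p u v k m

theorem choose_succ_succ_mul_pow (m j : ℕ) :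
    ((m + 1).choose (j + 1) : R) * u ^ (m + 1 - (j + 1)) * v ^ (j + 1)
      = u * (m.choose (j + 1) * u ^ (m - (j + 1)) * v ^ (j + 1))
        + v * (m.choose j * u ^ (m - j) * v ^ j) := by
  rw [Nat.add_sub_add_right, Nat.choose_succ_succ', Nat.cast_add]
  rcases lt_or_ge m (j + 1) with h | h
  · rw [Nat.choose_eq_zero_of_lt h]
    ring
  · obtain ⟨r, rfl⟩ := Nat.exists_eq_add_of_le h
    rw [show j + 1 + r - j = r + 1 by omega, Nat.add_sub_cancel_left]
    ring

variable {p}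

theorem compositionTerm_succ (k m : ℕ) :
    compositionTerm p u v (k + p + 1) (m + 1)
      = u * compositionTerm p u v (k + 1) m + v * compositionTerm p u v k m := by
  simp only [compositionTerm]
  rw [show (m + 1 + 1) * p = (m + 1) * p + p by ring]
  by_cases hk : (m + 1) * p ≤ k
  · rw [if_pos (by omega), if_pos (by omega), if_pos hk,
      show k + p + 1 - ((m + 1) * p + p) = k - (m + 1) * p + 1 by omega,
      show k + 1 - (m + 1) * p = k - (m + 1) * p + 1 by omega]
    exact choose_succ_succ_mul_pow u v m _
  by_cases hk' : (m + 1) * p = k + 1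
  · rw [if_pos (by omega), if_pos (by omega), if_neg hk,
      show k + p + 1 - ((m + 1) * p + p) = 0 by omega, show k + 1 - (m + 1) * p = 0 by omega]
    simp only [Nat.choose_zero_right, Nat.cast_one, pow_zero, Nat.sub_zero]
    ring
  · rw [if_neg (by omega), if_neg (by omega), if_neg hk]
    ring

theorem compositionTerm_eq_zero_of_lt {k m : ℕ} (h : k < (m + 1) * p) :
    compositionTerm p u v k m = 0 :=
  if_neg h.not_ge

theorem compositionSum_eq_sum_range (hp : 0 < p) {k N : ℕ} (hN : k < N) :
    compositionSum p u v k = ∑ m ∈ range N, compositionTerm p u v k m := by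
  refine sum_subset (range_subset_range.2 hN) fun m _ hm => ?_
  refine compositionTerm_eq_zero_of_lt u v ?_
  simp only [mem_range, not_lt] at hm
  nlinarith

theorem compositionSum_of_lt {k : ℕ} (hk : k < p) : compositionSum p u v k = 0 :=
  sum_eq_zero fun m _ => compositionTerm_eq_zero_of_lt u v (by nlinarith)

theorem compositionSum_self (p : ℕ) : compositionSum p u v p = 1 := by
  rw [compositionSum, sum_eq_single 0]
  · simp [compositionTerm]
  · intro m hm hm0
    refine compositionTerm_eq_zero_of_lt u v ?_
    have : 0 < p := by simp only [mem_range] at hm; omega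
    nlinarith [Nat.pos_of_ne_zero hm0]
  · simp

theorem compositionSum_add (hp : 0 < p) (k : ℕ) :
    compositionSum p u v (k + p + 1)
      = u * compositionSum p u v (k + 1) + v * compositionSum p u v k := by
  have hzero : compositionTerm p u v (k + p + 1) 0 = 0 := by
    simp [compositionTerm, show k + p + 1 - p = k + 1 by omega]
  rw [compositionSum, sum_range_succ', hzero, add_zero]
  simp only [compositionTerm_succ, sum_add_distrib, ← mul_sum]
  rw [compositionSum_eq_sum_range u v hp (by omega : k + 1 < k + p + 1),
    compositionSum_eq_sum_range u v hp (by omega : k < k + p + 1)]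

end CompositionSum

namespace MvPolynomial

section CoeffsDivPow

variable {σ : Type*} (p : ℕ) [hp : Fact p.Prime]

def coeffsDivPow (k : ℕ) : AddSubgroup (MvPolynomial σ ℚ) where
  carrier := {f | ∀ m, padicNorm p (f.coeff m) ≤ ((p : ℚ) ^ k)⁻¹}
  zero_mem' m := by simp [padicNorm.zero]
  add_mem' hf hg m := by
    rw [coeff_add]
    exact padicNorm.nonarchimedean.trans (max_le (hf m) (hg m))
  neg_mem' hf m := by
    rw [coeff_neg, padicNorm.neg]
    exact hf m

variable {p}

theorem coeffsDivPow_antitone :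
    Antitone (coeffsDivPow p : ℕ → AddSubgroup (MvPolynomial σ ℚ)) :=
  fun k _ h _ hf m => (hf m).trans <| inv_anti₀ (pow_pos (by exact_mod_cast hp.out.pos) k)
    (pow_le_pow_right₀ (by exact_mod_cast hp.out.one_le) h)

theorem mul_mem_coeffsDivPow {k l : ℕ} {f g : MvPolynomial σ ℚ} (hf : f ∈ coeffsDivPow p k)
    (hg : g ∈ coeffsDivPow p l) : f * g ∈ coeffsDivPow p (k + l) := by
  classical
  intro m
  rw [coeff_mul, pow_add, mul_inv]
  refine padicNorm.sum_le' (fun x _ => ?_) (by positivity)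
  rw [padicNorm.mul]
  exact mul_le_mul (hf _) (hg _) (padicNorm.nonneg _) (by positivity)

theorem mul_mem_coeffsDivPow_of_left_mem_zero {k : ℕ} {f g : MvPolynomial σ ℚ}
    (hf : f ∈ coeffsDivPow p 0) (hg : g ∈ coeffsDivPow p k) : f * g ∈ coeffsDivPow p k := by
  simpa using mul_mem_coeffsDivPow hf hg

theorem mul_mem_coeffsDivPow_of_right_mem_zero {k : ℕ} {f g : MvPolynomial σ ℚ}
    (hf : f ∈ coeffsDivPow p k) (hg : g ∈ coeffsDivPow p 0) : f * g ∈ coeffsDivPow p k := by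
  simpa using mul_mem_coeffsDivPow hf hg

theorem C_mem_coeffsDivPow {k : ℕ} {q : ℚ} (hq : padicNorm p q ≤ ((p : ℚ) ^ k)⁻¹) :
    (C q : MvPolynomial σ ℚ) ∈ coeffsDivPow p k := by
  classical
  intro m
  rw [coeff_C]
  split_ifs
  · exact hq
  · simp [padicNorm.zero]

theorem natCast_mem_coeffsDivPow_zero (n : ℕ) :
    (n : MvPolynomial σ ℚ) ∈ coeffsDivPow p 0 := by
  rw [← map_natCast C]
  exact C_mem_coeffsDivPow (by simpa using padicNorm.of_nat n)

theorem natCast_self_mem_coeffsDivPow_one : (p : MvPolynomial σ ℚ) ∈ coeffsDivPow p 1 := by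
  rw [← map_natCast C]
  exact C_mem_coeffsDivPow (by rw [padicNorm.padicNorm_p hp.out.one_lt, pow_one])

theorem one_mem_coeffsDivPow_zero : (1 : MvPolynomial σ ℚ) ∈ coeffsDivPow p 0 := by
  simpa using natCast_mem_coeffsDivPow_zero (σ := σ) (p := p) 1

theorem X_mem_coeffsDivPow_zero (i : σ) : (X i : MvPolynomial σ ℚ) ∈ coeffsDivPow p 0 := by
  classical
  intro m
  rw [coeff_X]
  split_ifs <;> simp [padicNorm.zero]

theorem pow_mem_coeffsDivPow_zero {f : MvPolynomial σ ℚ} (hf : f ∈ coeffsDivPow p 0) (n : ℕ) :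
    f ^ n ∈ coeffsDivPow p 0 := by
  induction n with
  | zero => simpa using one_mem_coeffsDivPow_zero
  | succ n ih => simpa [pow_succ] using mul_mem_coeffsDivPow ih hf

theorem neg_one_pow_mul_mem_coeffsDivPow {k : ℕ} {f : MvPolynomial σ ℚ}
    (hf : f ∈ coeffsDivPow p k) (n : ℕ) : (-1) ^ n * f ∈ coeffsDivPow p k := by
  simpa using mul_mem_coeffsDivPow
    (pow_mem_coeffsDivPow_zero (neg_mem one_mem_coeffsDivPow_zero) n) hf

theorem smul_mem_coeffsDivPow {k : ℕ} {q : ℚ} (hq : padicNorm p q ≤ 1) {f : MvPolynomial σ ℚ}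
    (hf : f ∈ coeffsDivPow p k) : q • f ∈ coeffsDivPow p k := by
  rw [smul_eq_C_mul]
  exact mul_mem_coeffsDivPow_of_left_mem_zero (C_mem_coeffsDivPow (by simpa using hq)) hf

theorem smul_mem_coeffsDivPow_of_mem_zero {k : ℕ} {q : ℚ}
    (hq : padicNorm p q ≤ ((p : ℚ) ^ k)⁻¹) {f : MvPolynomial σ ℚ}
    (hf : f ∈ coeffsDivPow p 0) : q • f ∈ coeffsDivPow p k := by
  rw [smul_eq_C_mul]
  exact mul_mem_coeffsDivPow_of_right_mem_zero (C_mem_coeffsDivPow hq) hf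

end CoeffsDivPow

section CompositionSumMem

variable {σ : Type*} {p : ℕ} [hp : Fact p.Prime] {u v : MvPolynomial σ ℚ}

theorem compositionSum_mem_coeffsDivPow_zero (hu : u ∈ coeffsDivPow p 0)
    (hv : v ∈ coeffsDivPow p 0) (k : ℕ) : compositionSum p u v k ∈ coeffsDivPow p 0 := by
  unfold compositionSum
  refine sum_mem fun m _ => ?_
  unfold compositionTerm
  split_ifs
  · exact mul_mem_coeffsDivPow_of_left_mem_zero (mul_mem_coeffsDivPow_of_left_mem_zero
      (natCast_mem_coeffsDivPow_zero _) (pow_mem_coeffsDivPow_zero hu _))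
      (pow_mem_coeffsDivPow_zero hv _)
  · exact zero_mem _

theorem compositionSum_mem_coeffsDivPow_one (hu : u ∈ coeffsDivPow p 0)
    (hv : v ∈ coeffsDivPow p 0) {k : ℕ} (hδ : (Nat.digits p ((k + 1) * (p - 1))).sum = p - 1) :
    compositionSum p u v k ∈ coeffsDivPow p 1 := by
  unfold compositionSum
  refine sum_mem fun m _ => ?_
  unfold compositionTerm
  split_ifs with h
  · obtain ⟨c, hc⟩ := Nat.dvd_choose_of_digits_sum_eq hδ
      (show k + 1 = (m + 1) * p + (k - (m + 1) * p) + 1 by omega)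
    rw [hc, Nat.cast_mul]
    exact mul_mem_coeffsDivPow_of_right_mem_zero (mul_mem_coeffsDivPow_of_right_mem_zero
      (mul_mem_coeffsDivPow_of_right_mem_zero natCast_self_mem_coeffsDivPow_one
        (natCast_mem_coeffsDivPow_zero c)) (pow_mem_coeffsDivPow_zero hu _))
      (pow_mem_coeffsDivPow_zero hv _)
  · exact zero_mem _

end CompositionSumMem

end MvPolynomial

theorem coeffsDivP_of_mem_coeffsDivPow_one {p : ℕ} [hp : Fact p.Prime] {f : MvPolynomial ℕ ℚ}
    (hf : f ∈ coeffsDivPow p 1) : CoeffsDivP p f := by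
  intro m
  refine or_iff_not_imp_left.2 fun h0 => ?_
  have h := hf m
  rw [padicNorm.eq_zpow_of_nonzero h0, pow_one, ← zpow_neg_one] at h
  have := (zpow_le_zpow_iff_right₀ (by exact_mod_cast hp.out.one_lt : (1 : ℚ) < p)).1 h
  omega

def NewtonIdentitiesUpTo (N : ℕ) (x : ℕ → MvPolynomial ℕ ℚ) : Prop :=
  ∀ n, 1 ≤ n → n ≤ N →
    x n = (n : ℚ)⁻¹ • ∑ i ∈ Finset.range n,
      (-1 : MvPolynomial ℕ ℚ) ^ i * x (n - (i + 1)) * MvPolynomial.X (i + 1)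

theorem Phi_X_of_le {p i : ℕ} (h : i ≤ p) : Phi p (X i) = (p : ℚ) • X i := by
  rw [Phi, aeval_X, if_pos h, Nat.cast_smul_eq_nsmul, nsmul_eq_mul]

theorem Phi_X_of_lt {p i : ℕ} (h : p < i) : Phi p (X i) = X i := by
  rw [Phi, aeval_X, if_neg h.not_ge]

theorem padicNorm_inv_natCast_of_not_dvd {p : ℕ} [Fact p.Prime] {n : ℕ} (h : ¬ p ∣ n) :
    padicNorm p (n : ℚ)⁻¹ = 1 := by
  rw [← one_div, padicNorm.div, padicNorm.one, (padicNorm.nat_eq_one_iff n).2 h, div_one]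

theorem Phi_x_eq_smul_sum {p : ℕ} {x : ℕ → MvPolynomial ℕ ℚ}
    (hx : NewtonIdentitiesUpTo (p + 1) x) {n : ℕ} (h1 : 1 ≤ n)
    (hn : n ≤ p) : Phi p (x n)
      = ((p : ℚ) / n) • ∑ i ∈ range n, (-1) ^ i * Phi p (x (n - (i + 1))) * X (i + 1) := by
  rw [hx n h1 (by omega), map_smul, map_sum, div_eq_inv_mul, mul_smul]
  congr 1
  rw [smul_sum]
  refine sum_congr rfl fun i hi => ?_
  rw [mem_range] at hi
  simp only [map_mul, map_pow, map_neg, map_one, Phi_X_of_le (show i + 1 ≤ p by omega),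
    mul_smul_comm]

section Newton

variable {p : ℕ} [hp : Fact p.Prime] {x : ℕ → MvPolynomial ℕ ℚ}

theorem Phi_x_mem_coeffsDivPow_one (hx0 : x 0 = 1) (hx : NewtonIdentitiesUpTo (p + 1) x)
    {n : ℕ} (h1 : 1 ≤ n) (hn : n < p) : Phi p (x n) ∈ coeffsDivPow p 1 := by
  induction n using Nat.strong_induction_on with
  | _ n ih =>
  rw [Phi_x_eq_smul_sum hx h1 hn.le]
  have hnorm : padicNorm p ((p : ℚ) / n) ≤ ((p : ℚ) ^ 1)⁻¹ := by
    rw [div_eq_mul_inv, padicNorm.mul, padicNorm.padicNorm_p hp.out.one_lt,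
      padicNorm_inv_natCast_of_not_dvd fun hd => (Nat.le_of_dvd h1 hd).not_gt hn, pow_one,
      mul_one]
  refine smul_mem_coeffsDivPow_of_mem_zero hnorm (sum_mem fun i hi => ?_)
  rw [mem_range] at hi
  refine mul_mem_coeffsDivPow_of_right_mem_zero
    (neg_one_pow_mul_mem_coeffsDivPow ?_ i) (X_mem_coeffsDivPow_zero _)
  rcases eq_or_ne (n - (i + 1)) 0 with h | h
  · rw [h, hx0, map_one]
    exact one_mem_coeffsDivPow_zero
  · exact coeffsDivPow_antitone zero_le_one (ih _ (by omega) (by omega) (by omega))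

theorem Phi_x_self_sub_mem (hx0 : x 0 = 1) (hx : NewtonIdentitiesUpTo (p + 1) x) :
    Phi p (x p) - (-1) ^ (p - 1) * X p ∈ coeffsDivPow p 1 := by
  rw [Phi_x_eq_smul_sum hx hp.out.one_le le_rfl, div_self (by exact_mod_cast hp.out.ne_zero),
    one_smul]
  obtain ⟨q, rfl⟩ : ∃ q, p = q + 1 := ⟨p - 1, by have := hp.out.one_lt; omega⟩
  rw [sum_range_succ, Nat.sub_self, hx0, map_one, mul_one, Nat.add_sub_cancel,
    add_sub_cancel_right]
  refine sum_mem fun i hi => ?_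
  rw [mem_range] at hi
  exact mul_mem_coeffsDivPow_of_right_mem_zero (neg_one_pow_mul_mem_coeffsDivPow
    (Phi_x_mem_coeffsDivPow_one hx0 hx (by omega) (by omega)) i) (X_mem_coeffsDivPow_zero _)

theorem Phi_x_mem_coeffsDivPow_zero (hx0 : x 0 = 1) (hx : NewtonIdentitiesUpTo (p + 1) x)
    {n : ℕ} (h1 : 1 ≤ n) (hn : n ≤ p) : Phi p (x n) ∈ coeffsDivPow p 0 := by
  rcases hn.lt_or_eq with hn | rfl
  · exact coeffsDivPow_antitone zero_le_one (Phi_x_mem_coeffsDivPow_one hx0 hx h1 hn)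
  · rw [← sub_add_cancel (Phi n (x n)) ((-1) ^ (n - 1) * X n)]
    exact add_mem (coeffsDivPow_antitone zero_le_one (Phi_x_self_sub_mem hx0 hx))
      (neg_one_pow_mul_mem_coeffsDivPow (X_mem_coeffsDivPow_zero _) _)

theorem Phi_x_succ_self_sub_mem (hx0 : x 0 = 1) (hx : NewtonIdentitiesUpTo (p + 1) x) :
    Phi p (x (p + 1)) - (-1) ^ p * X (p + 1) ∈ coeffsDivPow p 1 := by
  rw [hx (p + 1) (by omega) le_rfl, map_smul, map_sum, sum_range_succ, Nat.sub_self, hx0]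
  simp only [map_mul, map_pow, map_neg, map_one, mul_one, Phi_X_of_lt (Nat.lt_succ_self p)]
  set c : ℚ := ((p + 1 : ℕ) : ℚ)⁻¹
  set S := ∑ i ∈ range p, (-1) ^ i * Phi p (x (p + 1 - (i + 1))) * Phi p (X (i + 1))
  have hS : S ∈ coeffsDivPow p 1 := by
    refine sum_mem fun i hi => ?_
    rw [mem_range] at hi
    rw [Phi_X_of_le (show i + 1 ≤ p by omega), mul_smul_comm]
    refine smul_mem_coeffsDivPow_of_mem_zero
      (by rw [padicNorm.padicNorm_p hp.out.one_lt, pow_one])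
      (mul_mem_coeffsDivPow_of_right_mem_zero (neg_one_pow_mul_mem_coeffsDivPow
        (Phi_x_mem_coeffsDivPow_zero hx0 hx (by omega) (by omega)) i)
        (X_mem_coeffsDivPow_zero _))
  have hc : padicNorm p c = 1 := padicNorm_inv_natCast_of_not_dvd fun h =>
    hp.out.one_lt.ne' (Nat.dvd_one.1 ((Nat.dvd_add_right dvd_rfl).1 h))
  have hc1 : padicNorm p (c - 1) ≤ ((p : ℚ) ^ 1)⁻¹ := by
    have : c - 1 = -((p : ℚ) * c) := by
      simp only [c]
      field_simp
      push_cast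
      ring
    rw [this, padicNorm.neg, padicNorm.mul, hc, padicNorm.padicNorm_p hp.out.one_lt, pow_one,
      mul_one]
  have : c • (S + (-1) ^ p * X (p + 1)) - (-1) ^ p * X (p + 1)
      = c • S + (c - 1) • ((-1) ^ p * X (p + 1)) := by
    rw [smul_add, sub_smul, one_smul]; abel
  rw [this]
  exact add_mem (smul_mem_coeffsDivPow hc.le hS) (smul_mem_coeffsDivPow_of_mem_zero hc1
    (neg_one_pow_mul_mem_coeffsDivPow (X_mem_coeffsDivPow_zero _) _))

end Newton

theorem neg_one_pow_mul_mul_sub_mul_mem {p : ℕ} [Fact p.Prime] {a b c : MvPolynomial ℕ ℚ} (i : ℕ)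
    (hab : a - (-1) ^ i * b ∈ coeffsDivPow p 1) (hc : c ∈ coeffsDivPow p 0) :
    (-1) ^ i * a * c - b * c ∈ coeffsDivPow p 1 := by
  have hsq : ((-1) ^ i * (-1) ^ i : MvPolynomial ℕ ℚ) = 1 := by
    rw [← mul_pow, neg_one_mul, neg_neg, one_pow]
  have : (-1) ^ i * a * c - b * c = (-1) ^ i * (a - (-1) ^ i * b) * c := by
    linear_combination (b * c) * hsq
  rw [this]
  exact mul_mem_coeffsDivPow_of_right_mem_zero (neg_one_pow_mul_mem_coeffsDivPow hab i) hc

section PowerSums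

variable {p : ℕ} [hp : Fact p.Prime] {x y : ℕ → MvPolynomial ℕ ℚ}

theorem Phi_y_sub_recurrence_mem (hx0 : x 0 = 1) (hx : NewtonIdentitiesUpTo (p + 1) x)
    (hyrec : ∀ n, p + 2 ≤ n →
      y n = ∑ i ∈ Finset.range (p + 1),
        (-1 : MvPolynomial ℕ ℚ) ^ i * x (i + 1) * y (n - (i + 1)))
    {n : ℕ} (hn : p + 2 ≤ n) (hy : ∀ j, 1 ≤ j → j < n → Phi p (y j) ∈ coeffsDivPow p 0) :
    Phi p (y n) - (X p * Phi p (y (n - p)) + X (p + 1) * Phi p (y (n - (p + 1))))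
      ∈ coeffsDivPow p 1 := by
  have hp1 := hp.out.one_lt
  rw [hyrec n hn, map_sum]
  simp only [map_mul, map_pow, map_neg, map_one]
  obtain ⟨q, rfl⟩ : ∃ q, p = q + 1 := ⟨p - 1, by omega⟩
  have regroup : ∀ S A B C D : MvPolynomial ℕ ℚ, S + A + B - (C + D) = S + (A - C) + (B - D) :=
    fun _ _ _ _ _ => by abel
  rw [sum_range_succ, sum_range_succ, regroup]
  refine add_mem (add_mem (sum_mem fun i hi => ?_) ?_) ?_
  · rw [mem_range] at hi
    exact mul_mem_coeffsDivPow_of_right_mem_zero (neg_one_pow_mul_mem_coeffsDivPow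
      (Phi_x_mem_coeffsDivPow_one hx0 hx (by omega) (by omega)) i) (hy _ (by omega) (by omega))
  · have := Phi_x_self_sub_mem hx0 hx
    rw [Nat.add_sub_cancel] at this
    exact neg_one_pow_mul_mul_sub_mul_mem q this (hy _ (by omega) (by omega))
  · exact neg_one_pow_mul_mul_sub_mul_mem (q + 1) (Phi_x_succ_self_sub_mem hx0 hx)
      (hy _ (by omega) (by omega))

theorem Phi_y_succ_sub_compositionSum_mem (hx0 : x 0 = 1) (hx : NewtonIdentitiesUpTo (p + 1) x)
    (hy1 : ∀ n, 1 ≤ n → n ≤ p + 1 → y n = MvPolynomial.X n)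
    (hyrec : ∀ n, p + 2 ≤ n →
      y n = ∑ i ∈ Finset.range (p + 1),
        (-1 : MvPolynomial ℕ ℚ) ^ i * x (i + 1) * y (n - (i + 1)))
    (k : ℕ) :
    Phi p (y (k + 1)) - X (p + 1) * compositionSum p (X p) (X (p + 1)) k ∈ coeffsDivPow p 1 := by
  induction k using Nat.strong_induction_on with
  | _ k ih =>
  have hp1 := hp.out.one_lt
  have hT : ∀ j, X (p + 1) * compositionSum p (X p) (X (p + 1)) j ∈ coeffsDivPow p 0 :=
    fun j => mul_mem_coeffsDivPow_of_left_mem_zero (X_mem_coeffsDivPow_zero _)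
      (compositionSum_mem_coeffsDivPow_zero (X_mem_coeffsDivPow_zero _)
        (X_mem_coeffsDivPow_zero _) j)
  rcases lt_trichotomy k p with hk | rfl | hk
  · rw [compositionSum_of_lt _ _ hk, mul_zero, sub_zero, hy1 _ (by omega) (by omega),
      Phi_X_of_le (by omega)]
    exact smul_mem_coeffsDivPow_of_mem_zero
      (by rw [padicNorm.padicNorm_p hp.out.one_lt, pow_one]) (X_mem_coeffsDivPow_zero _)
  · rw [compositionSum_self, mul_one, hy1 _ (by omega) le_rfl, Phi_X_of_lt (by omega), sub_self]
    exact zero_mem _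
  · obtain ⟨k, rfl⟩ : ∃ k', k = k' + p + 1 := ⟨k - (p + 1), by omega⟩
    have hstep := Phi_y_sub_recurrence_mem hx0 hx hyrec (n := k + p + 1 + 1) (by omega)
      fun j hj1 hjn => by
        obtain ⟨j, rfl⟩ : ∃ j', j = j' + 1 := ⟨j - 1, by omega⟩
        simpa using add_mem (coeffsDivPow_antitone zero_le_one (ih j (by omega))) (hT j)
    rw [show k + p + 1 + 1 - p = k + 1 + 1 by omega,
      show k + p + 1 + 1 - (p + 1) = k + 1 by omega] at hstep
    rw [compositionSum_add _ _ hp.out.pos]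
    convert add_mem (add_mem hstep
      (mul_mem_coeffsDivPow_of_left_mem_zero (X_mem_coeffsDivPow_zero p) (ih (k + 1) (by omega))))
      (mul_mem_coeffsDivPow_of_left_mem_zero (X_mem_coeffsDivPow_zero (p + 1)) (ih k (by omega)))
      using 1
    ring

end PowerSums

/-- With `x_n` given by Newton's recursion and `y_n` extended by the linear recurrence
`y_n = ∑_{i=1}^{p+1} (-1)^{i-1} x_i y_{n-i}` for `n ≥ p+2`: if the base-`p` digit sum of
`n(p-1)` equals `p-1`, then `Φ(y_n) ∈ p ℤ_p[t_1, …, t_{p+1}]`. -/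
theorem phi_y_divisible (p : ℕ) (hp : p.Prime)
    (x : ℕ → MvPolynomial ℕ ℚ)
    (hx0 : x 0 = 1)
    (hxr : ∀ n, 1 ≤ n → n ≤ p + 1 →
      x n = (n : ℚ)⁻¹ • ∑ i ∈ Finset.range n,
        (-1 : MvPolynomial ℕ ℚ) ^ i * x (n - (i + 1)) * MvPolynomial.X (i + 1))
    (y : ℕ → MvPolynomial ℕ ℚ)
    (hy1 : ∀ n, 1 ≤ n → n ≤ p + 1 → y n = MvPolynomial.X n)
    (hyrec : ∀ n, p + 2 ≤ n →
      y n = ∑ i ∈ Finset.range (p + 1),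
        (-1 : MvPolynomial ℕ ℚ) ^ i * x (i + 1) * y (n - (i + 1)))
    (n : ℕ) (hn : 1 ≤ n) (hδ : (Nat.digits p (n * (p - 1))).sum = p - 1) :
    CoeffsDivP p (Phi p (y n)) := by
  have : Fact p.Prime := ⟨hp⟩
  obtain ⟨k, rfl⟩ : ∃ k, n = k + 1 := ⟨n - 1, by omega⟩
  have hcong := Phi_y_succ_sub_compositionSum_mem hx0 hxr hy1 hyrec k
  have hvanish := mul_mem_coeffsDivPow_of_left_mem_zero (X_mem_coeffsDivPow_zero (p + 1))
    (compositionSum_mem_coeffsDivPow_one (X_mem_coeffsDivPow_zero p)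
      (X_mem_coeffsDivPow_zero (p + 1)) hδ)
  exact coeffsDivP_of_mem_coeffsDivPow_one (by simpa using add_mem hcong hvanish)
end

section
/- Let $g_0, \dots, g_p$ be elements of a commutative $\mathbb{Z}_p$-algebra $R$ which is an integral domain, let $\upsilon_n := \sum_{j=0}^p g_j^n$ be the power sums, and let $\xi_1, \dots, \xi_{p+1}$ be the elementary symmetric polynomials in $g_0, \dots, g_p$. Suppose $\upsilon_n \in pR$ for $n = 1, \dots, p$, and $\upsilon_{p+1} \in R$. Then for every $n \ge 1$ with $\delta_p(n(p-1)) = p-1$, we have $\upsilon_n \in pR$. -/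
/-!
Work modulo `p`. In `S = R/pR`, Newton's identities together with `υ_1 = ⋯ = υ_p = 0` kill
`ξ_1, …, ξ_{p-1}` (the integers `1, …, p-1` being units), and `ξ_k = 0` for `k > p + 1`. Hence
`υ_m = A υ_{m-p} + B υ_{m-p-1}` for `m > p`, with `A = -(-1)^p ξ_p`, `B = (-1)^p ξ_{p+1}` and
`υ_0 = p + 1 = 1`; as generating series, `(∑ υ_m X^m - 1)(1 - A X^p - B X^{p+1}) = B X^{p+1}`.
So `υ_n` is `B` times the coefficient of `X^{n-p-1}` in `∑_s (A X^p + B X^{p+1})^s`, a sum of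
terms `C(i+j, j) A^i B^(j+1)` over `i p + (j+1)(p+1) = n`. Each of these binomials is divisible
by `p`: with `s` the base-`p` digit sum, `n(p-1) + p i + j = (i+j) p² + (p² - 1)` has digit sum
`s(i+j) + 2(p-1)`, which subadditivity bounds by `p - 1 + s(i) + s(j)`; by Kummer,
`(p-1) v_p C(i+j, j) = s(i) + s(j) - s(i+j) ≥ p - 1`.
-/

open Finset

namespace Nat

variable {p : ℕ} [hp : Fact p.Prime]

theorem digits_sum_add_le (a b : ℕ) :
    (p.digits (a + b)).sum ≤ (p.digits a).sum + (p.digits b).sum := by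
  have hfac : padicValNat p (a + b)! =
      padicValNat p ((a + b).choose b) + padicValNat p a ! + padicValNat p b ! := by
    have hchoose := (choose_pos (le_add_left b a)).ne'
    rw [← add_choose_mul_factorial_mul_factorial, padicValNat.mul (by positivity) (by positivity),
      padicValNat.mul hchoose (by positivity)]
  have hab := sub_one_mul_padicValNat_factorial (p := p) (a + b)
  have ha := sub_one_mul_padicValNat_factorial (p := p) a
  have hb := sub_one_mul_padicValNat_factorial (p := p) b
  rw [hfac, mul_add, mul_add] at hab
  have := digit_sum_le p a
  have := digit_sum_le p b
  have := digit_sum_le p (a + b)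
  omega

theorem digits_sum_base_mul {b : ℕ} (hb : 1 < b) (i : ℕ) :
    (b.digits (b * i)).sum = (b.digits i).sum := by
  rcases Nat.eq_zero_or_pos i with rfl | hi
  · simp
  · rw [digits_base_mul hb hi, List.sum_cons, zero_add]

theorem digits_sum_mul_base_sq_add_base_sq_sub_one {b : ℕ} (hb : 1 < b) (N : ℕ) :
    (b.digits (N * b ^ 2 + (b ^ 2 - 1))).sum = (b.digits N).sum + 2 * (b - 1) := by
  have h : N * b ^ 2 + (b ^ 2 - 1) = (b - 1) + b * ((b - 1) + b * N) := by
    obtain ⟨c, rfl⟩ : ∃ c, b = c + 1 := ⟨b - 1, by omega⟩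
    simp only [Nat.add_sub_cancel]
    rw [show (c + 1) ^ 2 - 1 = c * (c + 2) by ring_nf; omega]
    ring
  rw [h, digits_add b hb _ _ (by omega) (by omega), digits_add b hb _ _ (by omega) (by omega)]
  simp only [List.sum_cons]
  omega

theorem prime_dvd_choose_of_digits_sum_eq {n i j : ℕ} (hn : i * p + (j + 1) * (p + 1) = n)
    (hδ : (p.digits (n * (p - 1))).sum = p - 1) : p ∣ (i + j).choose j := by
  have hp1 := hp.out.one_lt
  have hsplit : n * (p - 1) + (p * i + j) = (i + j) * p ^ 2 + (p ^ 2 - 1) := by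
    obtain ⟨c, rfl⟩ : ∃ c, p = c + 1 := ⟨p - 1, by omega⟩
    subst hn
    simp only [Nat.add_sub_cancel]
    rw [show (c + 1) ^ 2 - 1 = c * (c + 2) by ring_nf; omega]
    ring
  have hle := (digits_sum_add_le (p := p) (n * (p - 1)) _).trans
    (Nat.add_le_add_left (digits_sum_add_le (p := p) (p * i) j) _)
  rw [hsplit, digits_sum_mul_base_sq_add_base_sq_sub_one hp1, hδ, digits_sum_base_mul hp1] at hle
  have hkummer := sub_one_mul_padicValNat_choose_eq_sub_sum_digits' (p := p) (k := j) (n := i)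
  refine dvd_of_one_le_padicValNat (Nat.le_of_mul_le_mul_left ?_ (by omega : 0 < p - 1))
  omega

end Nat

theorem isUnit_natCast_of_not_dvd {S : Type*} [CommRing S] {p : ℕ} [hp : Fact p.Prime] {k : ℕ}
    (hpS : (p : S) = 0) (hk : ¬ p ∣ k) : IsUnit (k : S) := by
  obtain ⟨l, -, hl⟩ := Nat.exists_mul_mod_eq_one_of_coprime
    (Nat.coprime_comm.mp (hp.out.coprime_iff_not_dvd.mpr hk)) hp.out.one_lt
  refine IsUnit.of_mul_eq_one (l : S) ?_
  rw [← Nat.cast_mul, ← Nat.mod_add_div (k * l) p, hl]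
  simp [hpS]

namespace PowerSeries

variable {S : Type*} [CommRing S]

theorem coeff_C_add_C_mul_X_pow (A B : S) (s j : ℕ) :
    coeff j ((C A + C B * X) ^ s) = s.choose j * A ^ (s - j) * B ^ j := by
  have hterm : ∀ k, (C B * X) ^ k * C A ^ (s - k) * (s.choose k : S⟦X⟧) =
      C (s.choose k * A ^ (s - k) * B ^ k) * X ^ k := by
    intro k
    simp only [mul_pow, map_mul, map_pow, map_natCast]
    ring
  simp_rw [add_comm (C A), add_pow, hterm, map_sum, coeff_C_mul_X_pow, sum_ite_eq, mem_range]
  split_ifs with h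
  · rfl
  · simp [Nat.choose_eq_zero_of_lt (by omega : s < j)]

theorem coeff_X_pow_mul_C_add_C_mul_X_pow (p : ℕ) (A B : S) (s m : ℕ) :
    coeff m ((X ^ p * (C A + C B * X)) ^ s) =
      if p * s ≤ m then
        (s.choose (m - p * s) * A ^ (s - (m - p * s)) * B ^ (m - p * s) : S)
      else 0 := by
  rw [mul_pow, ← pow_mul, coeff_X_pow_mul', coeff_C_add_C_mul_X_pow]

theorem coeff_X_pow_mul_C_add_C_mul_X_pow_eq_zero {p : ℕ} [Fact p.Prime] (hpS : (p : S) = 0)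
    (A B : S) {m : ℕ} (hδ : (p.digits ((m + p + 1) * (p - 1))).sum = p - 1) (s : ℕ) :
    coeff m ((X ^ p * (C A + C B * X)) ^ s) = 0 := by
  rw [coeff_X_pow_mul_C_add_C_mul_X_pow]
  split_ifs with hps
  · obtain ⟨j, hj⟩ : ∃ j, m = p * s + j := ⟨m - p * s, by omega⟩
    have hdvd : p ∣ s.choose (m - p * s) := by
      rw [hj, Nat.add_sub_cancel_left]
      rcases le_or_gt j s with hle | hlt
      · obtain ⟨i, rfl⟩ := Nat.exists_eq_add_of_le' hle
        exact Nat.prime_dvd_choose_of_digits_sum_eq (by rw [hj]; ring) hδ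
      · rw [Nat.choose_eq_zero_of_lt hlt]
        exact dvd_zero p
    obtain ⟨c, hc⟩ := hdvd
    rw [hc, Nat.cast_mul, hpS, zero_mul, zero_mul, zero_mul]
  · rfl

theorem mk_sub_one_mul_one_sub_eq {p : ℕ} (hp : 0 < p) {A B : S} {x : ℕ → S} (h0 : x 0 = 1)
    (hsmall : ∀ m, 0 < m → m ≤ p → x m = 0)
    (hrec : ∀ m, p < m → x m = A * x (m - p) + B * x (m - p - 1)) :
    (mk x - 1) * (1 - X ^ p * (C A + C B * X)) = C B * X ^ (p + 1) := by
  suffices h : mk x * (1 - X ^ p * (C A + C B * X)) = 1 - C A * X ^ p by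
    linear_combination h
  rw [show mk x * (1 - X ^ p * (C A + C B * X)) =
    mk x - X ^ p * (C A * mk x) - X ^ (p + 1) * (C B * mk x) by ring]
  ext m
  simp only [map_sub, coeff_mk, coeff_one, coeff_X_pow, coeff_X_pow_mul', coeff_C_mul]
  rcases Nat.lt_trichotomy m p with hm | rfl | hm
  · rcases Nat.eq_zero_or_pos m with rfl | hm0
    · simp [h0, hp.ne, hp.ne']
    · simp [hsmall m hm0 hm.le, hm.not_ge, hm0.ne', hm.ne, hm.not_gt]
  · simp [h0, hp.ne', hsmall m hp le_rfl]
  · simp [hrec m hm, Nat.sub_sub, hm.le, hm, hm.ne', Nat.ne_zero_of_lt hm]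

theorem eq_mul_coeff_geom_sum_of_rec {p : ℕ} (hp : 0 < p) {A B : S} {x : ℕ → S} (h0 : x 0 = 1)
    (hsmall : ∀ m, 0 < m → m ≤ p → x m = 0)
    (hrec : ∀ m, p < m → x m = A * x (m - p) + B * x (m - p - 1)) {m K : ℕ}
    (hK : m + p + 1 < K) :
    x (m + p + 1) = B * coeff m (∑ s ∈ range K, (X ^ p * (C A + C B * X)) ^ s) := by
  set F : S⟦X⟧ := X ^ p * (C A + C B * X) with hF
  have hgeom : (mk x - 1) * (1 - F ^ K) = X ^ (p + 1) * (C B * ∑ s ∈ range K, F ^ s) := by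
    rw [← mul_neg_geom_sum, ← mul_assoc, mk_sub_one_mul_one_sub_eq hp h0 hsmall hrec]
    ring
  have htail : coeff (m + p + 1) ((mk x - 1) * F ^ K) = 0 := by
    rw [hF, mul_pow, ← pow_mul, mul_left_comm, coeff_X_pow_mul', if_neg (by nlinarith)]
  have := congrArg (coeff (m + p + 1)) hgeom
  rwa [mul_sub, mul_one, map_sub, htail, sub_zero, map_sub, coeff_mk, coeff_one,
    if_neg (by omega), sub_zero, coeff_X_pow_mul', if_pos (by omega), add_assoc, Nat.add_sub_cancel,
    coeff_C_mul] at this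

end PowerSeries

namespace MvPolynomial

variable {σ R : Type*} [Fintype σ] [CommRing R]

theorem esymm_eq_zero_of_card_lt {k : ℕ} (hk : Fintype.card σ < k) : esymm σ R k = 0 := by
  rw [esymm, powersetCard_eq_empty.mpr (by rwa [card_univ]), sum_empty]

theorem sum_antidiagonal_esymm_mul_psum_eq_zero {m : ℕ} (hm : Fintype.card σ ≤ m) :
    ∑ a ∈ antidiagonal m, (-1) ^ a.1 * esymm σ R a.1 * psum σ R a.2 = 0 := by
  have hnewton := mul_esymm_eq_sum σ R m
  have hlast : {a ∈ antidiagonal m | ¬ a.1 < m} = {(m, 0)} := by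
    ext ⟨a, b⟩
    simp only [mem_filter, HasAntidiagonal.mem_antidiagonal, mem_singleton, Prod.mk.injEq]
    omega
  have hzero : ((m : MvPolynomial σ R) - Fintype.card σ) * esymm σ R m = 0 := by
    rcases hm.eq_or_lt with h | h
    · rw [h, sub_self, zero_mul]
    · rw [esymm_eq_zero_of_card_lt h, mul_zero]
  have hsq : ((-1 : MvPolynomial σ R) ^ m) * (-1) ^ m = 1 := by
    rw [← mul_pow]; simp
  rw [← sum_filter_add_sum_filter_not _ (fun a => a.1 < m), hlast, sum_singleton, psum_zero]
  linear_combination (-∑ a ∈ antidiagonal m with a.1 < m,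
    (-1) ^ a.1 * esymm σ R a.1 * psum σ R a.2) * hsq + (-1) ^ m * hnewton - (-1) ^ m * hzero

variable {S : Type*} [CommRing S] {p : ℕ} [hp : Fact p.Prime]

theorem eval_esymm_eq_zero_of_eval_psum_eq_zero (hpS : (p : S) = 0) (h : σ → S)
    (hP : ∀ m, 0 < m → m < p → eval h (psum σ S m) = 0) {k : ℕ} (hk0 : 0 < k) (hkp : k < p) :
    eval h (esymm σ S k) = 0 := by
  induction k using Nat.strong_induction_on with
  | _ k ih =>
    have hnewton := congrArg (eval h) (mul_esymm_eq_sum σ S k)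
    rw [map_mul, map_mul, map_natCast, map_sum, sum_eq_zero, mul_zero] at hnewton
    · have hunit := isUnit_natCast_of_not_dvd hpS (Nat.not_dvd_of_pos_of_lt hk0 hkp)
      exact hunit.mul_right_eq_zero.mp hnewton
    · rintro ⟨i, j⟩ hij
      simp only [mem_filter, HasAntidiagonal.mem_antidiagonal] at hij
      rcases Nat.eq_zero_or_pos i with rfl | hi
      · rw [map_mul, hP j (by omega) (by omega), mul_zero]
      · rw [map_mul, map_mul, ih i hij.2 hi (by omega), mul_zero, zero_mul]

theorem eval_psum_eq_of_lt (hpS : (p : S) = 0) (h : σ → S) (hcard : Fintype.card σ ≤ p + 1)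
    (hP : ∀ m, 0 < m → m < p → eval h (psum σ S m) = 0) {m : ℕ} (hm : p < m) :
    eval h (psum σ S m) =
      -(-1) ^ p * eval h (esymm σ S p) * eval h (psum σ S (m - p)) +
        (-1) ^ p * eval h (esymm σ S (p + 1)) * eval h (psum σ S (m - p - 1)) := by
  have hp0 := hp.out.pos
  have hnewton := congrArg (eval h) (sum_antidiagonal_esymm_mul_psum_eq_zero (R := S)
    (hcard.trans hm : Fintype.card σ ≤ m))
  have hsub : {(0, m), (p, m - p), (p + 1, m - p - 1)} ⊆ antidiagonal m := by
    simp only [insert_subset_iff, singleton_subset_iff, HasAntidiagonal.mem_antidiagonal]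
    omega
  have hne : (0, m) ∉ ({(p, m - p), (p + 1, m - p - 1)} : Finset (ℕ × ℕ)) := by
    simp only [mem_insert, mem_singleton, Prod.mk.injEq]
    omega
  rw [map_sum, map_zero, ← sum_subset hsub, sum_insert hne, sum_pair (by simp)] at hnewton
  · simp only [map_mul, map_pow, map_neg, map_one, esymm_zero, pow_zero, one_mul,
      Nat.sub_sub] at hnewton ⊢
    linear_combination hnewton
  · rintro ⟨i, j⟩ hij hnot
    simp only [HasAntidiagonal.mem_antidiagonal] at hij
    simp only [mem_insert, mem_singleton, Prod.mk.injEq, not_or] at hnot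
    rcases lt_or_gt_of_ne (show i ≠ p by omega) with hi | hi
    · rw [map_mul, map_mul, eval_esymm_eq_zero_of_eval_psum_eq_zero hpS h hP (by omega) hi,
        mul_zero, zero_mul]
    · rw [esymm_eq_zero_of_card_lt (by omega), map_mul, map_mul, map_zero, mul_zero, zero_mul]

end MvPolynomial

open MvPolynomial PowerSeries in
theorem sum_pow_eq_zero_of_digits_sum_eq {σ S : Type*} [Fintype σ] [CommRing S] {p : ℕ}
    [Fact p.Prime] (hpS : (p : S) = 0) (hcard : Fintype.card σ = p + 1) (h : σ → S)
    (hsmall : ∀ m, 1 ≤ m → m ≤ p → ∑ i, h i ^ m = 0)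
    {n : ℕ} (hn : 1 ≤ n) (hδ : (p.digits (n * (p - 1))).sum = p - 1) :
    ∑ i, h i ^ n = 0 := by
  have hp0 := (Fact.out : p.Prime).pos
  rcases le_or_gt n p with hnp | hnp
  · exact hsmall n hn hnp
  set x : ℕ → S := fun m => MvPolynomial.eval h (psum σ S m) with hx
  have hxsum : ∀ m, x m = ∑ i, h i ^ m := fun m => by simp [hx, psum]
  have hxsmall : ∀ m, 0 < m → m ≤ p → x m = 0 := fun m hm0 hmp => by
    rw [hxsum]; exact hsmall m hm0 hmp
  have hx0 : x 0 = 1 := by simp [hx, psum_zero, hcard, hpS]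
  obtain ⟨m, rfl⟩ : ∃ m, n = m + p + 1 := ⟨n - p - 1, by omega⟩
  rw [← hxsum, eq_mul_coeff_geom_sum_of_rec hp0 hx0 hxsmall
    (fun k hk => eval_psum_eq_of_lt hpS h hcard.le (fun l hl0 hlp => hxsmall l hl0 hlp.le) hk)
    (lt_add_one _), map_sum, sum_eq_zero, mul_zero]
  exact fun s _ => coeff_X_pow_mul_C_add_C_mul_X_pow_eq_zero hpS _ _ hδ s

theorem power_sums_divisibility_general (p : ℕ) [Fact p.Prime]
    (R : Type*) [CommRing R]
    (g : Fin (p + 1) → R)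
    (hsmall : ∀ n, 1 ≤ n → n ≤ p → ∃ c : R, ∑ j, g j ^ n = (p : R) * c)
    (n : ℕ) (hn : 1 ≤ n) (hδ : (Nat.digits p (n * (p - 1))).sum = p - 1) :
    ∃ c : R, ∑ j, g j ^ n = (p : R) * c := by
  set π := Ideal.Quotient.mk (Ideal.span {(p : R)})
  have hπ : ∀ m, π (∑ j, g j ^ m) = ∑ j, π (g j) ^ m := fun m => by simp
  change (p : R) ∣ _
  rw [← Ideal.Quotient.eq_zero_iff_dvd, hπ]
  refine sum_pow_eq_zero_of_digits_sum_eq ?_ (Fintype.card_fin _) _ (fun m hm1 hmp => ?_) hn hδ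
  · rw [← map_natCast π, Ideal.Quotient.eq_zero_iff_dvd]
  · rw [← hπ, Ideal.Quotient.eq_zero_iff_dvd]
    exact hsmall m hm1 hmp

/-- Let `g_0, …, g_p` be elements of a commutative `ℤ_p`-algebra `R` which is an
integral domain (with `p ≠ 0` in `R`, i.e. `R` is `p`-torsion-free), and let
`υ_n = ∑_j g_j^n`. If `υ_n ∈ pR` for `n = 1, …, p`, then `υ_n ∈ pR` for every `n ≥ 1`
with base-`p` digit sum of `n(p-1)` equal to `p-1`. -/
theorem power_sums_divisibility (p : ℕ) [Fact p.Prime]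
    (R : Type*) [CommRing R] [IsDomain R] [Algebra ℤ_[p] R]
    (hptf : (p : R) ≠ 0)
    (g : Fin (p + 1) → R)
    (hsmall : ∀ n, 1 ≤ n → n ≤ p → ∃ c : R, ∑ j, g j ^ n = (p : R) * c)
    (n : ℕ) (hn : 1 ≤ n) (hδ : (Nat.digits p (n * (p - 1))).sum = p - 1) :
    ∃ c : R, ∑ j, g j ^ n = (p : R) * c :=
  power_sums_divisibility_general p R g hsmall n hn hδ
end

section
/- Let $p$ be a prime and let $s \in \mathbb{N}$ with $\delta_p(s) < p - 1$, where $\delta_p$ is the base-$p$ digit sum. Choose $t \in \mathbb{N}$ with $s < p^t$ and define $k_m := s + (p - 1 - \delta_p(s)) \cdot p^{m+t}$ for $m \ge 1$. Then each $k_m$ satisfies $\delta_p(k_m) = p - 1$; moreover $k_m \to \infty$ in $\mathbb{R}$ and $k_m \to s$ in $\mathbb{Z}_p$ as $m \to \infty$. -/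
open Filter

theorem Nat.digits_sum_of_lt {b d : ℕ} (hd : d < b) : (b.digits d).sum = d := by
  rcases eq_or_ne d 0 with rfl | hd0
  · simp
  · simp [Nat.digits_of_lt b d hd0 hd]

theorem Nat.digits_sum_add_base_pow_mul {b k n : ℕ} (hb : 1 < b) (hn : n < b ^ k) (m : ℕ) :
    (b.digits (n + b ^ k * m)).sum = (b.digits n).sum + (b.digits m).sum := by
  rcases m.eq_zero_or_pos with rfl | hm
  · simp
  have hlen : (b.digits n).length ≤ k := (Nat.digits_length_le_iff hb n).mpr hn
  have h := Nat.digits_append_zeroes_append_digits (n := n) (k := k - (b.digits n).length) hb hm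
  rw [Nat.add_sub_cancel' hlen] at h
  simp [← h]

theorem tendsto_add_mul_pow_atTop {α : Type*} [Semiring α] [LinearOrder α] [IsStrictOrderedRing α]
    [ExistsAddOfLE α] [Archimedean α] {a c r : α} (ha : 0 ≤ a) (hc : 0 < c) (hr : 1 < r) (t : ℕ) :
    Tendsto (fun m : ℕ => a + c * r ^ (m + t)) atTop atTop :=
  tendsto_atTop_mono (fun _ => le_add_of_nonneg_left ha) <|
    ((tendsto_pow_atTop_atTop_of_one_lt hr).comp (tendsto_add_atTop_nat t)).const_mul_atTop' hc

theorem tendsto_add_mul_pow_nhds {R : Type*} [SeminormedRing R] {q : R} (hq : ‖q‖ < 1)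
    (a c : R) (t : ℕ) : Tendsto (fun m : ℕ => a + c * q ^ (m + t)) atTop (nhds a) := by
  have h : Tendsto (fun m : ℕ => q ^ (m + t)) atTop (nhds 0) :=
    (tendsto_pow_atTop_nhds_zero_of_norm_lt_one hq).comp (tendsto_add_atTop_nat t)
  simpa using tendsto_const_nhds.add (h.const_mul c)

theorem weight_approximation_general (p : ℕ) [Fact p.Prime] (s : ℕ)
    (hδ : (Nat.digits p s).sum < p - 1)
    (t : ℕ) (ht : s < p ^ t) :
    (∀ m : ℕ, 1 ≤ m →
      (Nat.digits p (s + (p - 1 - (Nat.digits p s).sum) * p ^ (m + t))).sum = p - 1) ∧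
    Tendsto (fun m : ℕ => s + (p - 1 - (Nat.digits p s).sum) * p ^ (m + t)) atTop atTop ∧
    Tendsto (fun m : ℕ =>
        ((s + (p - 1 - (Nat.digits p s).sum) * p ^ (m + t) : ℕ) : ℚ_[p]))
      atTop (nhds (s : ℚ_[p])) := by
  have hp : 1 < p := (Fact.out : p.Prime).one_lt
  refine ⟨fun m _ => ?_, tendsto_add_mul_pow_atTop s.zero_le (by omega) hp t, ?_⟩
  · have hs : s < p ^ (m + t) := ht.trans_le (Nat.pow_le_pow_right hp.le (by omega))
    have hc : p - 1 - (p.digits s).sum < p := by omega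
    rw [mul_comm, Nat.digits_sum_add_base_pow_mul hp hs, Nat.digits_sum_of_lt hc]
    omega
  · push_cast
    exact tendsto_add_mul_pow_nhds Padic.norm_p_lt_one _ _ t

/-- Let `p` be a prime and `s ≥ 1` with base-`p` digit sum `δ_p(s) < p - 1`. Choose `t`
with `s < p^t` and set `k_m = s + (p - 1 - δ_p(s)) p^{m+t}`. Then `δ_p(k_m) = p - 1` for
all `m ≥ 1`, `k_m → ∞`, and `k_m → s` in `ℚ_p`. -/
theorem weight_approximation (p : ℕ) [Fact p.Prime] (s : ℕ) (hs : 1 ≤ s)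
    (hδ : (Nat.digits p s).sum < p - 1)
    (t : ℕ) (ht : s < p ^ t) :
    (∀ m : ℕ, 1 ≤ m →
      (Nat.digits p (s + (p - 1 - (Nat.digits p s).sum) * p ^ (m + t))).sum = p - 1) ∧
    Tendsto (fun m : ℕ => s + (p - 1 - (Nat.digits p s).sum) * p ^ (m + t)) atTop atTop ∧
    Tendsto (fun m : ℕ =>
        ((s + (p - 1 - (Nat.digits p s).sum) * p ^ (m + t) : ℕ) : ℚ_[p]))
      atTop (nhds (s : ℚ_[p])) :=
  weight_approximation_general p s hδ t ht
end
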